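/- arXiv:1803.03248 — 7 statements merged into one kernel-verified Lean document; each statement's English description precedes it below -/
import Mathlib

section
/- In a connected graph where every vertex has degree at most Δ, if the graph is neither a complete graph nor an odd cycle, then the graph has a proper vertex coloring with Δ colors. -/
open SimpleGraph

def IsOddCycle {V : Type*} (G : SimpleGraph V) : Prop :=
  G.Connected ∧ (∀ v, (G.neighborSet v).ncard = 2) ∧ Odd (Nat.card V)

def TwoConnected {V : Type*} (G : SimpleGraph V) : Prop :=
  3 ≤ Nat.card V ∧ ∀ v : V, (G.induce {w : V | w ≠ v}).Connected

def DegreeChoosable {V : Type*} (G : SimpleGraph V) : Prop :=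
  ∀ L : V → Finset ℕ, (∀ v, (G.neighborSet v).ncard ≤ (L v).card) →
    ∃ c : V → ℕ, (∀ v, c v ∈ L v) ∧ ∀ u w, G.Adj u w → c u ≠ c w

def IsDCC {V : Type*} (G : SimpleGraph V) (S : Set V) : Prop :=
  TwoConnected (G.induce S) ∧ G.induce S ≠ ⊤ ∧ ¬ IsOddCycle (G.induce S)

def RadiusLE {V : Type*} (G : SimpleGraph V) (S : Set V) (r : ℕ) : Prop :=
  ∃ u : S, ∀ w : S, (G.induce S).dist u w ≤ r

def NoSmallDCC {V : Type*} (G : SimpleGraph V) (r : ℕ) : Prop :=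
  ∀ S : Set V, IsDCC G S → ¬ RadiusLE G S r

def gball {V : Type*} (G : SimpleGraph V) (v : V) (r : ℕ) : Set V :=
  {u | G.Reachable v u ∧ G.dist v u ≤ r}

noncomputable def childCount {V : Type*} (G : SimpleGraph V) (v u : V) : ℕ :=
  {w | G.Adj u w ∧ G.dist v w = G.dist v u + 1}.ncard

/-!
Lovász's proof. If some vertex `v` has degree below `Δ`, colour greedily in order of decreasing
distance from `v`: every other vertex, when its turn comes, still has an uncoloured neighbour
closer to `v`. Otherwise `G` is `Δ`-regular, and `Δ ≥ 2` as `G` is connected but not complete.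
For `Δ = 2`, `G` is an even cycle, coloured by the parity of the distance to a fixed vertex.
If `G` has a cut vertex `z`, colour `z` together with each side of it (on each side `z` misses
a neighbour) and permute colours so that the two colourings agree at `z`. Otherwise `G` is
2-connected and has a vertex `v` with non-adjacent neighbours `a`, `b` such that `G - {a, b}` is
connected: any induced path `a - v - b` if `G` has no separating pair, and otherwise `v = x`,
`a ∈ C`, `b ∉ C` for an inclusion-minimal component `C` of some `G - {x, y}`. Colour `a` and `b`
alike, then the rest greedily towards `v`, which sees at most `Δ - 1` colours.
-/

namespace SimpleGraph

variable {V : Type*} {G : SimpleGraph V}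

/-! ### Connectivity inside a vertex set -/

def ReachableIn (G : SimpleGraph V) (S : Set V) (u w : V) : Prop :=
  ∃ p : G.Walk u w, ∀ x ∈ p.support, x ∈ S

def PreconnectedIn (G : SimpleGraph V) (S : Set V) : Prop :=
  ∀ u ∈ S, ∀ w ∈ S, G.ReachableIn S u w

def componentIn (G : SimpleGraph V) (S : Set V) (u : V) : Set V :=
  {w | G.ReachableIn S u w}

namespace ReachableIn

variable {S T : Set V} {u w x : V}

theorem refl (hu : u ∈ S) : G.ReachableIn S u u :=
  ⟨.nil, by simpa using hu⟩

theorem right_mem (h : G.ReachableIn S u w) : w ∈ S :=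
  h.elim fun p hp => hp w p.end_mem_support

theorem symm (h : G.ReachableIn S u w) : G.ReachableIn S w u :=
  h.elim fun p hp => ⟨p.reverse, by simpa using hp⟩

theorem trans (h : G.ReachableIn S u w) (h' : G.ReachableIn S w x) : G.ReachableIn S u x := by
  obtain ⟨p, hp⟩ := h
  obtain ⟨q, hq⟩ := h'
  refine ⟨p.append q, fun y hy => ?_⟩
  rcases (Walk.mem_support_append_iff _ _).1 hy with hy | hy
  exacts [hp y hy, hq y hy]

theorem of_adj (h : G.Adj u w) (hu : u ∈ S) (hw : w ∈ S) : G.ReachableIn S u w :=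
  ⟨h.toWalk, by simp [hu, hw]⟩

theorem mono (hST : S ⊆ T) (h : G.ReachableIn S u w) : G.ReachableIn T u w :=
  h.elim fun p hp => ⟨p, fun y hy => hST (hp y hy)⟩

theorem inter_of_closed {D : Set V} (hD : ∀ d ∈ D, ∀ e ∈ S, G.Adj d e → e ∈ D)
    (h : G.ReachableIn S u w) (hu : u ∈ D) : G.ReachableIn (S ∩ D) u w := by
  obtain ⟨p, hp⟩ := h
  induction p with
  | nil => exact refl ⟨hp _ (by simp), hu⟩
  | @cons u v w huv p ih =>
    have hv : v ∈ S := hp v (by simp)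
    have hvD : v ∈ D := hD u hu v hv huv
    exact (of_adj (S := S ∩ D) huv ⟨hp u (by simp), hu⟩ ⟨hv, hvD⟩).trans
      (ih hvD fun y hy => hp y (by simp [hy]))

theorem exists_adj_of_mem_of_notMem {D : Set V} (h : G.ReachableIn S u w) (hu : u ∈ D)
    (hw : w ∉ D) : ∃ d ∈ D, ∃ e ∈ S, e ∉ D ∧ G.Adj d e := by
  obtain ⟨p, hp⟩ := h
  obtain ⟨d, hd, hd₁, hd₂⟩ := p.exists_boundary_dart D hu hw
  exact ⟨d.fst, hd₁, d.snd, hp _ (p.dart_snd_mem_support_of_mem_darts hd), hd₂, d.adj⟩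

end ReachableIn

theorem PreconnectedIn.of_forall_reachableIn {S : Set V} (x : V)
    (h : ∀ t ∈ S, G.ReachableIn S t x) : G.PreconnectedIn S :=
  fun u hu w hw => (h u hu).trans (h w hw).symm

theorem Connected.preconnectedIn_univ (h : G.Connected) : G.PreconnectedIn Set.univ :=
  fun u _ w _ => (h u w).elim fun p => ⟨p, fun _ _ => trivial⟩

namespace componentIn

variable {S T : Set V} {u w x : V}

theorem mem_self (hu : u ∈ S) : u ∈ G.componentIn S u := ReachableIn.refl hu

theorem subset : G.componentIn S u ⊆ S := fun _ h => ReachableIn.right_mem h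

theorem adj_mem (hw : w ∈ G.componentIn S u) (h : G.Adj w x) (hx : x ∈ S) :
    x ∈ G.componentIn S u :=
  ReachableIn.trans hw (.of_adj h (ReachableIn.right_mem hw) hx)

theorem reachableIn (hw : w ∈ G.componentIn S u) (hx : x ∈ G.componentIn S u) :
    G.ReachableIn (G.componentIn S u) w x := by
  have := (ReachableIn.trans hw.symm hx).inter_of_closed (fun _ hd _ he h => adj_mem hd h he) hw
  exact this.mono Set.inter_subset_right

theorem subset_of_closed {D : Set V} (hD : ∀ d ∈ D, ∀ e ∈ S, G.Adj d e → e ∈ D)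
    (hu : u ∈ D) : G.componentIn S u ⊆ D :=
  fun _ h => (h.inter_of_closed hD hu).right_mem.2

end componentIn

theorem PreconnectedIn.exists_adj_componentIn {S T : Set V} {t s : V}
    (hT : G.PreconnectedIn T) (hST : S ⊆ T) (ht : t ∈ S) (hs : s ∈ T)
    (hst : s ∉ G.componentIn S t) :
    ∃ d ∈ G.componentIn S t, ∃ e ∈ T, e ∉ S ∧ G.Adj d e := by
  obtain ⟨d, hd, e, heT, he, hde⟩ :=
    (hT t (hST ht) s hs).exists_adj_of_mem_of_notMem (componentIn.mem_self ht) hst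
  exact ⟨d, hd, e, heT, fun heS => he (componentIn.adj_mem hd hde heS), hde⟩

/-! ### Greedy colouring -/

theorem exists_listColoring_of_ncard_lt {β : Type*} [LinearOrder β] (f : V → β)
    (L : V → Finset ℕ) (s : Finset V)
    (h : ∀ u ∈ s, (G.neighborSet u ∩ {w | w ∈ s ∧ f w ≤ f u}).ncard < (L u).card) :
    ∃ c : V → ℕ, (∀ u ∈ s, c u ∈ L u) ∧ ∀ u ∈ s, ∀ w ∈ s, G.Adj u w → c u ≠ c w := by
  classical
  induction s using Finset.induction_on_max_value f with
  | empty => exact ⟨fun _ => 0, by simp, by simp⟩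
  | insert a s ha hmax ih =>
    obtain ⟨c, hcL, hc⟩ := ih fun u hu => (Set.ncard_le_ncard (by
      intro w ⟨hw, hws, hwf⟩; exact ⟨hw, Finset.mem_insert_of_mem hws, hwf⟩)).trans_lt
        (h u (Finset.mem_insert_of_mem hu))
    have hused : ((s.filter (G.Adj a)).image c).card < (L a).card := by
      refine Finset.card_image_le.trans_lt
        ((le_of_eq ?_).trans_lt (h a (Finset.mem_insert_self a s)))
      rw [← Set.ncard_coe_finset]
      congr 1
      ext w
      simp only [Finset.coe_filter, Set.mem_ofPred_eq, Set.mem_inter_iff, mem_neighborSet,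
        Finset.mem_insert]
      exact ⟨fun ⟨hws, hw⟩ => ⟨hw, Or.inr hws, hmax w hws⟩,
        fun ⟨hw, hws, _⟩ => ⟨hws.resolve_left (G.ne_of_adj hw).symm, hw⟩⟩
    obtain ⟨k, hkL, hk⟩ := Finset.exists_mem_notMem_of_card_lt_card hused
    have hk' : ∀ w ∈ s, G.Adj a w → c w ≠ k := fun w hw haw hwk =>
      hk (Finset.mem_image.2 ⟨w, Finset.mem_filter.2 ⟨hw, haw⟩, hwk⟩)
    refine ⟨Function.update c a k, ?_, ?_⟩
    · intro u hu
      rcases Finset.mem_insert.1 hu with rfl | hu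
      · simpa using hkL
      · rw [Function.update_of_ne (ne_of_mem_of_not_mem hu ha)]
        exact hcL u hu
    · intro u hu w hw huw
      rcases Finset.mem_insert.1 hu with rfl | hus <;>
        rcases Finset.mem_insert.1 hw with rfl | hws
      · exact absurd huw (G.loopless.irrefl _)
      · rw [Function.update_self, Function.update_of_ne (ne_of_mem_of_not_mem hws ha)]
        exact (hk' w hws huw).symm
      · rw [Function.update_self, Function.update_of_ne (ne_of_mem_of_not_mem hus ha)]
        exact hk' u hus huw.symm
      · rw [Function.update_of_ne (ne_of_mem_of_not_mem hus ha),
          Function.update_of_ne (ne_of_mem_of_not_mem hws ha)]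
        exact hc u hus w hws huw

noncomputable def distIn (G : SimpleGraph V) (S : Set V) (u v : V) : ℕ :=
  sInf {n | ∃ p : G.Walk u v, (∀ x ∈ p.support, x ∈ S) ∧ p.length = n}

theorem ReachableIn.exists_adj_distIn_lt {S : Set V} {u v : V} (h : G.ReachableIn S u v)
    (huv : u ≠ v) : ∃ w ∈ S, G.Adj u w ∧ G.distIn S w v < G.distIn S u v := by
  obtain ⟨p, hpS, hp⟩ := Nat.sInf_mem (s := {n | ∃ p : G.Walk u v, (∀ x ∈ p.support, x ∈ S) ∧
    p.length = n}) (h.elim fun p hp => ⟨p.length, p, hp, rfl⟩)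
  cases p with
  | nil => exact absurd rfl huv
  | @cons _ w _ huw q =>
    refine ⟨w, hpS w (by simp), huw, ?_⟩
    have hq : G.distIn S w v ≤ q.length :=
      Nat.sInf_le ⟨q, fun x hx => hpS x (by simp [hx]), rfl⟩
    have hu : G.distIn S u v = q.length + 1 := hp.symm
    omega

theorem PreconnectedIn.exists_listColoring [Finite V] {S : Set V} {v : V}
    (hS : G.PreconnectedIn S) (hv : v ∈ S) (L : V → Finset ℕ)
    (hL : ∀ u ∈ S, (G.neighborSet u ∩ S).ncard ≤ (L u).card)
    (hLv : (G.neighborSet v ∩ S).ncard < (L v).card) :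
    ∃ c : V → ℕ, (∀ u ∈ S, c u ∈ L u) ∧ ∀ u ∈ S, ∀ w ∈ S, G.Adj u w → c u ≠ c w := by
  -- colour greedily from the vertices farthest from `v` inwards
  let f u := OrderDual.toDual (G.distIn S u v)
  have hsub : ∀ u, G.neighborSet u ∩ {w | w ∈ S.toFinite.toFinset ∧ f w ≤ f u} ⊆
      G.neighborSet u ∩ S := fun u w hw => ⟨hw.1, by simpa using hw.2.1⟩
  obtain ⟨c, hcL, hc⟩ := exists_listColoring_of_ncard_lt f L S.toFinite.toFinset (fun u hu => by
    rw [Set.Finite.mem_toFinset] at hu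
    by_cases huv : u = v
    · subst huv
      exact (Set.ncard_le_ncard (hsub u)).trans_lt hLv
    obtain ⟨w, hwS, huw, hwu⟩ := (hS u hu v hv).exists_adj_distIn_lt huv
    have hw : w ∈ G.neighborSet u ∩ S := ⟨huw, hwS⟩
    refine (Set.ncard_le_ncard (t := (G.neighborSet u ∩ S) \ {w})
      fun x hx => ⟨hsub u hx, ?_⟩).trans_lt
        ((Set.ncard_sdiff_singleton_lt_of_mem hw).trans_le (hL u hu))
    rintro rfl
    exact absurd hx.2.2 (not_le.2 hwu))
  exact ⟨c, fun u hu => hcL u (by simpa using hu),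
    fun u hu w hw => hc u (by simpa using hu) w (by simpa using hw)⟩

theorem colorable_of_forall_lt {n : ℕ} (c : V → ℕ) (hc : ∀ v, c v < n)
    (h : ∀ u w, G.Adj u w → c u ≠ c w) : G.Colorable n :=
  (colorable_iff_exists_bdd_nat_coloring n).2 ⟨Coloring.mk c fun huw => h _ _ huw, hc⟩

theorem ncard_neighborSet_inter_lt [Finite V] {S : Set V} {n : ℕ} {v w : V}
    (hv : (G.neighborSet v).ncard ≤ n) (hvw : G.Adj v w) (hw : w ∉ S) :
    (G.neighborSet v ∩ S).ncard < n :=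
  (Set.ncard_lt_ncard (Set.ssubset_iff_of_subset Set.inter_subset_left |>.2
    ⟨w, hvw, fun h => hw h.2⟩) (Set.toFinite _)).trans_le hv

theorem PreconnectedIn.exists_coloring_lt [Finite V] {S : Set V} {v : V} {n : ℕ}
    (hS : G.PreconnectedIn S) (hv : v ∈ S) (hdeg : ∀ u, (G.neighborSet u).ncard ≤ n)
    (hvS : (G.neighborSet v ∩ S).ncard < n) :
    ∃ c : V → ℕ, (∀ u ∈ S, c u < n) ∧ ∀ u ∈ S, ∀ w ∈ S, G.Adj u w → c u ≠ c w := by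
  obtain ⟨c, hcL, hc⟩ := hS.exists_listColoring hv (fun _ => Finset.range n)
    (fun u _ => by simpa using (Set.ncard_le_ncard Set.inter_subset_left).trans (hdeg u))
    (by simpa using hvS)
  exact ⟨c, fun u hu => Finset.mem_range.1 (hcL u hu), hc⟩

theorem Connected.colorable_of_ncard_neighborSet_lt [Finite V] {n : ℕ} {v : V}
    (hconn : G.Connected) (hdeg : ∀ u, (G.neighborSet u).ncard ≤ n)
    (hv : (G.neighborSet v).ncard < n) : G.Colorable n := by
  obtain ⟨c, hc, hcG⟩ := hconn.preconnectedIn_univ.exists_coloring_lt (Set.mem_univ v) hdeg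
    (by simpa using hv)
  exact colorable_of_forall_lt c (fun u => hc u trivial) fun u w => hcG u trivial w trivial

/-! ### Cut vertices -/

theorem colorable_of_colorings_of_cutVertex {C : Set V} {z : V} {n : ℕ} (hz : z ∉ C)
    (hC : ∀ v ∈ C, ∀ w, G.Adj v w → w ∉ C → w = z) (c₁ c₂ : V → ℕ)
    (hc₁ : ∀ v ∈ insert z C, c₁ v < n)
    (hc₁G : ∀ u ∈ insert z C, ∀ w ∈ insert z C, G.Adj u w → c₁ u ≠ c₁ w)
    (hc₂ : ∀ v ∉ C, c₂ v < n) (hc₂G : ∀ u ∉ C, ∀ w ∉ C, G.Adj u w → c₂ u ≠ c₂ w) :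
    G.Colorable n := by
  classical
  let σ := Equiv.swap (c₁ z) (c₂ z)
  have hσz : σ (c₁ z) = c₂ z := Equiv.swap_apply_left _ _
  have hcross : ∀ u ∈ C, ∀ w ∉ C, G.Adj u w → σ (c₁ u) ≠ c₂ w := by
    intro u hu w hw huw
    obtain rfl := hC u hu w huw hw
    rw [← hσz, σ.injective.ne_iff]
    exact hc₁G u (Set.mem_insert_of_mem _ hu) w (Set.mem_insert _ _) huw
  refine colorable_of_forall_lt (fun v => if v ∈ C then σ (c₁ v) else c₂ v) (fun v => ?_) ?_
  · have h₁ := hc₁ z (Set.mem_insert _ _)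
    have h₂ := hc₂ z hz
    split_ifs with hv
    · have := hc₁ v (Set.mem_insert_of_mem _ hv)
      simp only [σ, Equiv.swap_apply_def]
      split_ifs <;> omega
    · exact hc₂ v hv
  · intro u w huw
    by_cases hu : u ∈ C <;> by_cases hw : w ∈ C <;> simp only [hu, hw, if_true, if_false]
    · exact σ.injective.ne
        (hc₁G u (Set.mem_insert_of_mem _ hu) w (Set.mem_insert_of_mem _ hw) huw)
    · exact hcross u hu w hw huw
    · exact (hcross w hw u hu huw.symm).symm
    · exact hc₂G u hu w hw huw

theorem Connected.exists_adj_mem_componentIn_compl_singleton (hconn : G.Connected) {z t : V}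
    (ht : t ≠ z) : ∃ e ∈ G.componentIn {z}ᶜ t, G.Adj z e := by
  obtain ⟨d, hd, e, -, he, hde⟩ := hconn.preconnectedIn_univ.exists_adj_componentIn
    (Set.subset_univ _) (Set.mem_compl_singleton_iff.2 ht) (Set.mem_univ z)
    (fun h => componentIn.subset h rfl)
  rw [Set.notMem_compl_iff, Set.mem_singleton_iff] at he
  exact ⟨d, hd, he ▸ hde.symm⟩

theorem Connected.colorable_of_not_reachableIn_compl_singleton [Finite V] {n : ℕ}
    {z u₁ u₂ : V} (hconn : G.Connected) (hdeg : ∀ v, (G.neighborSet v).ncard ≤ n) (hu₁ : u₁ ≠ z)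
    (hu₂ : u₂ ≠ z) (h : ¬G.ReachableIn {z}ᶜ u₁ u₂) : G.Colorable n := by
  set C := G.componentIn {z}ᶜ u₁
  have hzC : z ∉ C := fun h => componentIn.subset h rfl
  have hC : ∀ v ∈ C, ∀ w, G.Adj v w → w ∉ C → w = z := fun v hv w hvw hw => by
    by_contra hwz
    exact hw (componentIn.adj_mem hv hvw hwz)
  obtain ⟨e₁, he₁, hze₁⟩ := hconn.exists_adj_mem_componentIn_compl_singleton hu₁
  obtain ⟨e₂, he₂, hze₂⟩ := hconn.exists_adj_mem_componentIn_compl_singleton hu₂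
  have he₂C : e₂ ∉ insert z C := by
    rintro (rfl | he₂C)
    · exact he₂.right_mem rfl
    · exact h (ReachableIn.trans he₂C he₂.symm)
  have hA : G.PreconnectedIn (insert z C) := by
    refine .of_forall_reachableIn z fun t ht => ?_
    rcases ht with rfl | ht
    · exact .refl (Set.mem_insert _ _)
    · exact ((componentIn.reachableIn ht he₁).mono (Set.subset_insert _ _)).trans
        (.of_adj hze₁.symm (Set.mem_insert_of_mem _ he₁) (Set.mem_insert _ _))
  have hB : G.PreconnectedIn Cᶜ := by
    refine .of_forall_reachableIn z fun t ht => ?_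
    by_cases htz : t = z
    · subst htz; exact .refl hzC
    obtain ⟨e, he, hze⟩ := hconn.exists_adj_mem_componentIn_compl_singleton htz
    have hsub : G.componentIn {z}ᶜ t ⊆ Cᶜ := fun y hy hyC => ht (ReachableIn.trans hyC hy.symm)
    exact ((componentIn.reachableIn (componentIn.mem_self htz) he).mono hsub).trans
      (.of_adj hze.symm (hsub he) hzC)
  obtain ⟨c₁, hc₁, hc₁G⟩ := hA.exists_coloring_lt (Set.mem_insert _ _) hdeg
    (ncard_neighborSet_inter_lt (hdeg z) hze₂ he₂C)
  obtain ⟨c₂, hc₂, hc₂G⟩ := hB.exists_coloring_lt hzC hdeg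
    (ncard_neighborSet_inter_lt (hdeg z) hze₁ (not_not.2 he₁))
  exact colorable_of_colorings_of_cutVertex hzC hC c₁ c₂ hc₁ hc₁G hc₂ hc₂G

/-! ### Fragments of 2-connected graphs -/

theorem Connected.exists_adj_adj_not_adj_of_ne_top (hconn : G.Connected) (htop : G ≠ ⊤) :
    ∃ x a b : V, G.Adj x a ∧ G.Adj a b ∧ ¬G.Adj x b ∧ x ≠ b := by
  obtain ⟨u, w, huw, hnadj⟩ := ne_top_iff_exists_not_adj.1 htop
  obtain ⟨p, hp⟩ := hconn.exists_walk_length_eq_dist u w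
  exact p.exists_adj_adj_not_adj_ne hp (hconn.one_lt_dist_of_ne_of_not_adj huw hnadj)

theorem PreconnectedIn.exists_adj_mem_componentIn_compl_pair {x y t : V}
    (hy : G.PreconnectedIn {y}ᶜ) (hxy : x ≠ y) (ht : t ∉ ({x, y} : Set V)) :
    ∃ a ∈ G.componentIn {x, y}ᶜ t, G.Adj x a := by
  obtain ⟨d, hd, e, he, he', hde⟩ := hy.exists_adj_componentIn
    (Set.compl_subset_compl.2 (by simp)) ht (Set.mem_compl_singleton_iff.2 hxy)
    (fun h => componentIn.subset h (Set.mem_insert _ _))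
  obtain rfl : e = x := by
    simp only [Set.mem_compl_iff, Set.mem_insert_iff, Set.mem_singleton_iff, not_or,
      not_and_or, not_not] at he he'
    tauto
  exact ⟨d, hd, hde.symm⟩

def IsFragment (G : SimpleGraph V) (x y : V) (C : Set V) : Prop :=
  x ≠ y ∧ ∃ u ∉ ({x, y} : Set V), C = G.componentIn {x, y}ᶜ u ∧ ∃ w ∉ ({x, y} : Set V), w ∉ C

theorem IsFragment.symm {x y : V} {C : Set V} (h : G.IsFragment x y C) :
    G.IsFragment y x C := by
  rwa [IsFragment, Set.pair_comm, ne_comm]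

theorem IsFragment.exists_adj_of_minimal {x y a t : V} {C : Set V}
    (hC : G.IsFragment x y C) (hmin : Minimal (fun D => ∃ p q, G.IsFragment p q D) C)
    (ha : a ∈ C) (ht : t ∈ C) (hta : t ≠ a) :
    ∃ d ∈ G.componentIn {x, y, a}ᶜ t, G.Adj y d := by
  by_contra! hno
  obtain ⟨hxy, u, -, rfl, -⟩ := hC
  have htxya : t ∈ ({x, y, a} : Set V)ᶜ := by
    have := componentIn.subset ht
    simp_all
  -- without `y`-neighbours, the component of `t` in `G - {x, y, a}` is closed in `G - {x, a}`,
  -- so it contains a fragment of `{x, a}` that misses `a ∈ C`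
  have hD : G.componentIn {x, a}ᶜ t ⊆ G.componentIn {x, y, a}ᶜ t := by
    refine componentIn.subset_of_closed (fun d hd e he hde => componentIn.adj_mem hd hde ?_)
      (componentIn.mem_self htxya)
    have hey : e ≠ y := by rintro rfl; exact hno d hd hde.symm
    simp_all
  have hDC : G.componentIn {x, y, a}ᶜ t ⊆ G.componentIn {x, y}ᶜ u := fun e he =>
    ReachableIn.trans ht (ReachableIn.mono (Set.compl_subset_compl.2 (by
      simp [Set.insert_subset_iff])) he)
  have haC := componentIn.subset ha
  have hfrag : G.IsFragment x a (G.componentIn {x, a}ᶜ t) := by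
    refine ⟨?_, t, ?_, rfl, y, ?_, fun hy => componentIn.subset (hDC (hD hy)) (by simp)⟩
    · rintro rfl; simp at haC
    · simp_all
    · simp only [Set.mem_compl_iff, Set.mem_insert_iff, Set.mem_singleton_iff, not_or] at haC ⊢
      exact ⟨hxy.symm, fun h => haC.2 h.symm⟩
  have := hmin.le_of_le ⟨x, a, hfrag⟩ (hD.trans hDC) ha
  exact componentIn.subset (hD this) (by simp)

theorem IsFragment.reachableIn_of_minimal {x y a b t : V} {C : Set V}
    (hC : G.IsFragment x y C) (hmin : Minimal (fun D => ∃ p q, G.IsFragment p q D) C)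
    (ha : a ∈ C) (hb : b ∉ C) (hyb : y ≠ b) (ht : t ∈ C) (hta : t ≠ a) :
    G.ReachableIn {a, b}ᶜ t y := by
  obtain ⟨d, hd, hyd⟩ := hC.exists_adj_of_minimal hmin ha ht hta
  obtain ⟨-, u, -, rfl, -⟩ := hC
  have hsub : G.componentIn {x, y, a}ᶜ t ⊆ ({a, b} : Set V)ᶜ := by
    intro e he
    have hea := componentIn.subset he
    have heb : e ≠ b := fun h => hb (h ▸ ReachableIn.trans ht (ReachableIn.mono
      (Set.compl_subset_compl.2 (by simp [Set.insert_subset_iff])) he))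
    simp only [Set.mem_compl_iff, Set.mem_insert_iff, Set.mem_singleton_iff] at hea ⊢
    tauto
  have htT : t ∈ ({x, y, a} : Set V)ᶜ := by
    have := componentIn.subset ht
    simp only [Set.mem_compl_iff, Set.mem_insert_iff, Set.mem_singleton_iff] at this ⊢
    tauto
  have hyS : y ∈ ({a, b} : Set V)ᶜ := by
    have := componentIn.subset ha
    simp only [Set.mem_compl_iff, Set.mem_insert_iff, Set.mem_singleton_iff] at this ⊢
    exact fun h => h.elim (fun h => this (.inr h.symm)) hyb
  exact ((componentIn.reachableIn (componentIn.mem_self htT) hd).mono hsub).trans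
    (.of_adj hyd.symm (hsub hd) hyS)

/-- Since `b` is not a cut vertex, the component of `t` in `G - {x, y, b}` has a neighbour
in `{x, y}`. -/
theorem PreconnectedIn.reachableIn_compl_pair_or {x y a b t : V}
    (hb : G.PreconnectedIn {b}ᶜ) (hxS : x ∈ ({a, b} : Set V)ᶜ) (hyS : y ∈ ({a, b} : Set V)ᶜ)
    (ht : t ∉ ({x, y, b} : Set V)) (ha : a ∉ G.componentIn {x, y}ᶜ t) :
    G.ReachableIn {a, b}ᶜ t x ∨ G.ReachableIn {a, b}ᶜ t y := by
  have hxb : x ≠ b := fun h => hxS (by simp [h])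
  obtain ⟨d, hd, e, he, he', hde⟩ := hb.exists_adj_componentIn
    (Set.compl_subset_compl.2 (by simp)) ht (Set.mem_compl_singleton_iff.2 hxb)
    (fun h => componentIn.subset h (Set.mem_insert _ _))
  have hsub : G.componentIn {x, y, b}ᶜ t ⊆ ({a, b} : Set V)ᶜ := by
    intro f hf
    have hfa : f ≠ a := fun h => ha (h ▸ ReachableIn.mono (Set.compl_subset_compl.2
      (by simp [Set.insert_subset_iff])) hf)
    have hfb := componentIn.subset hf
    simp only [Set.mem_compl_iff, Set.mem_insert_iff, Set.mem_singleton_iff] at hfb ⊢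
    tauto
  have hdt := (componentIn.reachableIn (componentIn.mem_self ht) hd).mono hsub
  simp only [Set.mem_compl_iff, Set.mem_insert_iff, Set.mem_singleton_iff, not_or,
    not_and_or, not_not] at he he'
  obtain rfl | rfl : e = x ∨ e = y := by tauto
  · exact .inl (hdt.trans (.of_adj hde (hsub hd) hxS))
  · exact .inr (hdt.trans (.of_adj hde (hsub hd) hyS))

theorem IsFragment.exists_of_minimal [Finite V] {x y : V} {C : Set V}
    (hdeg : ∀ v, 3 ≤ (G.neighborSet v).ncard) (h2 : ∀ z, G.PreconnectedIn {z}ᶜ)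
    (hC : G.IsFragment x y C) (hmin : Minimal (fun D => ∃ p q, G.IsFragment p q D) C) :
    ∃ a b, G.Adj x a ∧ G.Adj x b ∧ ¬G.Adj a b ∧ a ≠ b ∧ G.PreconnectedIn {a, b}ᶜ := by
  obtain ⟨hxy, u, hu, rfl, w, hw, hwC⟩ := id hC
  set C := G.componentIn {x, y}ᶜ u
  obtain ⟨a, ha, hxa⟩ := (h2 y).exists_adj_mem_componentIn_compl_pair hxy hu
  obtain ⟨b, hb, hxb⟩ := (h2 y).exists_adj_mem_componentIn_compl_pair hxy hw
  have haxy := componentIn.subset ha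
  have hbxy := componentIn.subset hb
  have hbC : b ∉ C := fun h => hwC (ReachableIn.trans h hb.symm)
  have hxS : x ∈ ({a, b} : Set V)ᶜ := by
    simp only [Set.mem_compl_iff, Set.mem_insert_iff, Set.mem_singleton_iff, not_or]
    exact ⟨G.ne_of_adj hxa, G.ne_of_adj hxb⟩
  have hyS : y ∈ ({a, b} : Set V)ᶜ := by
    simp only [Set.mem_compl_iff, Set.mem_insert_iff, Set.mem_singleton_iff, not_or]
      at haxy hbxy ⊢
    exact ⟨fun h => haxy.2 h.symm, fun h => hbxy.2 h.symm⟩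
  have hreachC : ∀ t ∈ C, t ≠ a → G.ReachableIn {a, b}ᶜ t x := fun t ht hta =>
    hC.symm.reachableIn_of_minimal hmin ha hbC (G.ne_of_adj hxb) ht hta
  obtain ⟨t₀, hat₀, ht₀⟩ := Set.exists_mem_notMem_of_ncard_lt_ncard (s := ({x, y} : Set V))
    (((Set.ncard_insert_le x {y}).trans (by simp)).trans_lt (hdeg a))
  have ht₀C : t₀ ∈ C := componentIn.adj_mem ha hat₀ ht₀
  have hreachy : G.ReachableIn {a, b}ᶜ y x :=
    (hC.reachableIn_of_minimal hmin ha hbC (fun h => hyS (by simp [h])) ht₀C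
      (G.ne_of_adj hat₀).symm).symm.trans (hreachC t₀ ht₀C (G.ne_of_adj hat₀).symm)
  refine ⟨a, b, hxa, hxb, fun h => hbC (componentIn.adj_mem ha h hbxy), fun h => hbC (h ▸ ha),
    .of_forall_reachableIn x fun t ht => ?_⟩
  by_cases htC : t ∈ C
  · exact hreachC t htC fun h => ht (by simp [h])
  by_cases htx : t = x
  · subst htx; exact .refl hxS
  by_cases hty : t = y
  · subst hty; exact hreachy
  have htb : t ≠ b := fun h => ht (by simp [h])
  rcases (h2 b).reachableIn_compl_pair_or hxS hyS (by simp [htx, hty, htb])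
    (fun h => htC (ReachableIn.trans ha h.symm)) with h | h
  exacts [h, h.trans hreachy]

theorem Connected.exists_adj_adj_preconnectedIn_compl_pair [Finite V] (hconn : G.Connected)
    (htop : G ≠ ⊤) (hdeg : ∀ v, 3 ≤ (G.neighborSet v).ncard)
    (h2 : ∀ z, G.PreconnectedIn {z}ᶜ) :
    ∃ v a b, G.Adj v a ∧ G.Adj v b ∧ ¬G.Adj a b ∧ a ≠ b ∧ G.PreconnectedIn {a, b}ᶜ := by
  by_cases hfrag : ∃ x y C, G.IsFragment x y C
  · obtain ⟨C, hmin⟩ := exists_minimal_of_wellFoundedLT (fun C => ∃ x y, G.IsFragment x y C)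
      (by obtain ⟨x, y, C, h⟩ := hfrag; exact ⟨C, x, y, h⟩)
    obtain ⟨x, y, hC⟩ := hmin.prop
    exact ⟨x, hC.exists_of_minimal hdeg h2 hmin⟩
  · obtain ⟨x, a, b, hxa, hab, hxb, hne⟩ := hconn.exists_adj_adj_not_adj_of_ne_top htop
    refine ⟨a, x, b, hxa.symm, hab, hxb, hne, fun p hp q hq => ?_⟩
    by_contra hpq
    exact hfrag ⟨x, b, _, hne, p, hp, rfl, q, hq, hpq⟩

theorem colorable_of_coloring_compl_isIndepSet {P : Set V} {n : ℕ} (hP : G.IsIndepSet P)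
    (hn : 0 < n) (c : V → ℕ) (hc : ∀ u ∉ P, c u < n)
    (hcG : ∀ u ∉ P, ∀ w ∉ P, G.Adj u w → c u ≠ c w)
    (hc0 : ∀ p ∈ P, ∀ u ∉ P, G.Adj p u → c u ≠ 0) : G.Colorable n := by
  classical
  refine colorable_of_forall_lt (fun u => if u ∈ P then 0 else c u)
    (fun u => ?_) (fun p q hpq => ?_)
  · split_ifs with hu
    exacts [hn, hc u hu]
  · by_cases hp : p ∈ P <;> by_cases hq : q ∈ P <;> simp only [hp, hq, if_true, if_false]
    · exact absurd hpq (hP hp hq (G.ne_of_adj hpq))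
    · exact (hc0 p hp q hq hpq).symm
    · exact hc0 q hq p hp hpq.symm
    · exact hcG p hp q hq hpq

theorem colorable_of_adj_adj_preconnectedIn [Finite V] {Δ : ℕ} {v a b : V}
    (hdeg : ∀ u, (G.neighborSet u).ncard ≤ Δ) (hva : G.Adj v a) (hvb : G.Adj v b)
    (hab : ¬G.Adj a b) (hne : a ≠ b) (hS : G.PreconnectedIn {a, b}ᶜ) : G.Colorable Δ := by
  classical
  have hsplit : ∀ u, (G.neighborSet u ∩ {a, b}ᶜ).ncard + (G.neighborSet u ∩ {a, b}).ncard ≤ Δ :=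
    fun u => by
      have := Set.ncard_inter_add_ncard_sdiff_eq_ncard (G.neighborSet u) {a, b}ᶜ
      rw [Set.sdiff_compl] at this
      exact this ▸ hdeg u
  have hv := hsplit v
  rw [Set.inter_eq_right.2 (show ({a, b} : Set V) ⊆ G.neighborSet v from
    Set.insert_subset hva (Set.singleton_subset_iff.2 hvb)), Set.ncard_pair hne] at hv
  let L u := if G.Adj a u ∨ G.Adj b u then (Finset.range Δ).erase 0 else Finset.range Δ
  have hLcard : ((Finset.range Δ).erase 0).card = Δ - 1 := by
    rw [Finset.card_erase_of_mem (Finset.mem_range.2 (by omega)), Finset.card_range]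
  obtain ⟨c, hcL, hc⟩ := hS.exists_listColoring (v := v)
    (by simp [G.ne_of_adj hva, G.ne_of_adj hvb]) L (fun u hu => by
      have := hsplit u
      by_cases hab' : G.Adj a u ∨ G.Adj b u
      · have hpos : 0 < (G.neighborSet u ∩ {a, b}).ncard := (Set.ncard_pos).2 (by
          rcases hab' with h | h
          exacts [⟨a, h.symm, by simp⟩, ⟨b, h.symm, by simp⟩])
        simp only [L, if_pos hab', hLcard]
        omega
      · simp only [L, if_neg hab', Finset.card_range]
        omega)
    (by simp only [L, if_pos (Or.inl hva.symm), hLcard]; omega)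
  refine colorable_of_coloring_compl_isIndepSet (P := {a, b}) ?_ (by omega) c (fun u hu => ?_) hc ?_
  · rintro p (rfl | rfl) q (rfl | rfl) hpq
    exacts [absurd rfl hpq, hab, fun h => hab h.symm, absurd rfl hpq]
  · have := hcL u hu
    simp only [L] at this
    split_ifs at this
    exacts [Finset.mem_range.1 (Finset.mem_of_mem_erase this), Finset.mem_range.1 this]
  · intro p hp u hu hpu
    have hab' : G.Adj a u ∨ G.Adj b u := by
      rcases hp with rfl | rfl
      exacts [.inl hpu, .inr hpu]
    have := hcL u hu
    simp only [L, if_pos hab'] at this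
    exact Finset.ne_of_mem_erase this

/-! ### Graphs of maximum degree two -/

theorem Connected.exists_adj_dist_add_one_eq (hconn : G.Connected) {v₀ u : V} (hu : u ≠ v₀) :
    ∃ w, G.Adj u w ∧ G.dist v₀ w + 1 = G.dist v₀ u := by
  obtain ⟨p, hp⟩ := hconn.exists_walk_length_eq_dist u v₀
  cases p with
  | nil => exact absurd rfl hu
  | @cons _ w _ huw q =>
    refine ⟨w, huw, ?_⟩
    have h₁ : G.dist w v₀ ≤ q.length := dist_le q
    have h₂ : G.dist v₀ u ≤ G.dist v₀ w + G.dist w u := hconn.dist_triangle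
    rw [Walk.length_cons] at hp
    rw [dist_comm (v := u), dist_eq_one_iff_adj.2 huw.symm] at *
    rw [dist_comm] at h₁
    omega

theorem eq_or_eq_or_eq_of_adj_of_adj_of_adj [Finite V] {x a b c : V}
    (hx : (G.neighborSet x).ncard ≤ 2) (ha : G.Adj x a) (hb : G.Adj x b) (hc : G.Adj x c) :
    a = b ∨ a = c ∨ b = c := by
  by_contra! h
  have h₁ : ({a, b, c} : Set V).ncard = 3 := by
    rw [Set.ncard_insert_of_notMem (by simp [h.1, h.2.1]), Set.ncard_pair h.2.2]
  have h₂ : ({a, b, c} : Set V).ncard ≤ (G.neighborSet x).ncard :=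
    Set.ncard_le_ncard (by simp [Set.insert_subset_iff, ha, hb, hc])
  omega

noncomputable def sphere [Fintype V] (G : SimpleGraph V) (v : V) (n : ℕ) : Finset V :=
  {x | G.dist v x = n}

@[simp] theorem mem_sphere [Fintype V] {v x : V} {n : ℕ} : x ∈ G.sphere v n ↔ G.dist v x = n := by
  simp [sphere]

section MaxDegreeTwo

variable [Fintype V] {v₀ : V}

theorem Connected.card_sphere_succ_le (hconn : G.Connected)
    (hdeg : ∀ v, (G.neighborSet v).ncard ≤ 2) {j : ℕ} (hj : 1 ≤ j) :
    (G.sphere v₀ (j + 1)).card ≤ (G.sphere v₀ j).card := by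
  choose! par hpar using fun y (hy : y ≠ v₀) => hconn.exists_adj_dist_add_one_eq hy
  have hne : ∀ {y n}, G.dist v₀ y = n + 1 → y ≠ v₀ := fun hy h => by simp [h] at hy
  refine Finset.card_le_card_of_injOn par (fun y hy => ?_) (fun y hy y' hy' h => ?_)
  · simp only [Finset.mem_coe, mem_sphere] at hy ⊢
    have := (hpar y (hne hy)).2
    omega
  -- a vertex other than `v₀` has a parent, so at most one neighbour one level further out
  simp only [Finset.mem_coe, mem_sphere] at hy hy'
  have hx : G.dist v₀ (par y) = j := by have := (hpar y (hne hy)).2; omega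
  obtain ⟨hxp, hp⟩ := hpar (par y) (hne (n := j - 1) (by omega))
  have h₁ := (hpar y (hne hy)).1.symm
  have h₂ := (hpar y' (hne hy')).1.symm
  rw [← h] at h₂
  rcases eq_or_eq_or_eq_of_adj_of_adj_of_adj (hdeg _) hxp h₁ h₂ with h' | h' | h'
  · rw [← h'] at hy; omega
  · rw [← h'] at hy'; omega
  · exact h'

theorem Connected.card_sphere_le_two (hconn : G.Connected)
    (hdeg : ∀ v, (G.neighborSet v).ncard ≤ 2) {j : ℕ} (hj : 1 ≤ j) :
    (G.sphere v₀ j).card ≤ 2 := by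
  induction j, hj using Nat.le_induction with
  | base =>
    rw [← Set.ncard_coe_finset]
    refine (Set.ncard_le_ncard fun x hx => ?_).trans (hdeg v₀)
    simpa using hx
  | succ j hj ih => exact (hconn.card_sphere_succ_le hdeg hj).trans ih

theorem Connected.card_sphere_le_of_le (hconn : G.Connected)
    (hdeg : ∀ v, (G.neighborSet v).ncard ≤ 2) {i j : ℕ} (hi : 1 ≤ i) (hij : i ≤ j) :
    (G.sphere v₀ j).card ≤ (G.sphere v₀ i).card := by
  induction j, hij using Nat.le_induction with
  | base => exact le_rfl
  | succ j hij ih => exact (hconn.card_sphere_succ_le hdeg (hi.trans hij)).trans ih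

theorem Connected.sphere_succ_eq_empty [DecidableEq V] (hconn : G.Connected)
    (hdeg : ∀ v, (G.neighborSet v).ncard ≤ 2) {k : ℕ} {u w : V} (hk : 1 ≤ k) (huw : G.Adj u w)
    (hu : G.dist v₀ u = k) (hsk : G.sphere v₀ k = {u, w}) : G.sphere v₀ (k + 1) = ∅ := by
  have hw : G.dist v₀ w = k := mem_sphere.1 (hsk ▸ Finset.mem_insert_of_mem (by simp))
  refine Finset.eq_empty_of_forall_notMem fun y hy => ?_
  rw [mem_sphere] at hy
  obtain ⟨p, hyp, hp⟩ := hconn.exists_adj_dist_add_one_eq (u := y) (v₀ := v₀)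
    (fun h => by simp [h] at hy)
  have hpk : p ∈ G.sphere v₀ k := by rw [mem_sphere]; omega
  -- `p` already has a neighbour in its own sphere and one in the previous one
  obtain ⟨q, hpq, hq⟩ : ∃ q, G.Adj p q ∧ G.dist v₀ q = k := by
    rw [hsk, Finset.mem_insert, Finset.mem_singleton] at hpk
    rcases hpk with rfl | rfl
    exacts [⟨w, huw, hw⟩, ⟨u, huw.symm, hu⟩]
  obtain ⟨r, hpr, hr⟩ := hconn.exists_adj_dist_add_one_eq (u := p) (v₀ := v₀)
    (fun h => by simp [h] at hp; omega)
  rcases eq_or_eq_or_eq_of_adj_of_adj_of_adj (hdeg p) hpq hyp.symm hpr with h | h | h <;>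
    subst h <;> omega

/-- An edge inside a sphere closes an odd cycle through `v₀`: the spheres of radius `1, …, k`
have two vertices each and nothing lies further out. -/
theorem Connected.odd_card_of_adj_of_dist_eq (hconn : G.Connected)
    (hdeg : ∀ v, (G.neighborSet v).ncard ≤ 2) {u w : V} (huw : G.Adj u w)
    (hd : G.dist v₀ u = G.dist v₀ w) : Odd (Fintype.card V) := by
  classical
  set k := G.dist v₀ u
  have hk : 1 ≤ k := by
    by_contra! h
    have hu : v₀ = u := hconn.dist_eq_zero_iff.1 (by omega)
    have hw : v₀ = w := hconn.dist_eq_zero_iff.1 (by omega)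
    exact G.ne_of_adj huw (hu.symm.trans hw)
  have hsk : G.sphere v₀ k = {u, w} := by
    refine (Finset.eq_of_subset_of_card_le (by simp [Finset.insert_subset_iff, k, hd]) ?_).symm
    rw [Finset.card_pair (G.ne_of_adj huw)]
    exact hconn.card_sphere_le_two hdeg hk
  have hempty := hconn.sphere_succ_eq_empty hdeg hk huw rfl hsk
  have hle : ∀ x, G.dist v₀ x ≤ k := fun x => by
    by_contra! h
    have := hconn.card_sphere_le_of_le hdeg (v₀ := v₀) (by omega) h
    rw [hempty, Finset.card_empty, Nat.le_zero, Finset.card_eq_zero] at this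
    exact Finset.notMem_empty x (this ▸ mem_sphere.2 rfl)
  have hcard : Fintype.card V = ∑ j ∈ Finset.range (k + 1), (G.sphere v₀ j).card :=
    Finset.card_eq_sum_card_fiberwise fun x _ => Finset.mem_range.2 (Nat.lt_succ_of_le (hle x))
  have h₀ : G.sphere v₀ 0 = {v₀} := by ext; simp [hconn.dist_eq_zero_iff, eq_comm]
  have h₂ : ∀ i ∈ Finset.range k, (G.sphere v₀ (i + 1)).card = 2 := fun i hi => by
    have := hconn.card_sphere_le_two hdeg (v₀ := v₀) (Nat.le_add_left 1 i)
    have := hconn.card_sphere_le_of_le hdeg (v₀ := v₀) (Nat.le_add_left 1 i)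
      (Finset.mem_range.1 hi)
    rw [hsk, Finset.card_pair (G.ne_of_adj huw)] at this
    omega
  rw [hcard, Finset.sum_range_succ', Finset.sum_congr rfl h₂, h₀]
  simp

theorem Connected.colorable_two_of_even_card (hconn : G.Connected)
    (hdeg : ∀ v, (G.neighborSet v).ncard ≤ 2) (heven : Even (Fintype.card V)) : G.Colorable 2 := by
  obtain ⟨v₀⟩ := hconn.nonempty
  refine colorable_of_forall_lt (fun u => G.dist v₀ u % 2) (fun u => Nat.mod_lt _ two_pos)
    fun u w huw h => ?_
  have hdist : G.dist v₀ u = G.dist v₀ w := by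
    rcases huw.diff_dist_adj (u := v₀) with h' | h' | h' <;> omega
  exact Nat.not_odd_iff_even.2 heven (hconn.odd_card_of_adj_of_dist_eq hdeg huw hdist)

end MaxDegreeTwo

end SimpleGraph

/-- Brooks' theorem: a connected graph with all degrees at most Δ which is
neither complete nor an odd cycle is Δ-colorable. -/
theorem stmt0 {V : Type*} [Fintype V] (G : SimpleGraph V) (Δ : ℕ)
    (hconn : G.Connected)
    (hmax : ∀ v, (G.neighborSet v).ncard ≤ Δ)
    (hclique : G ≠ ⊤)
    (hodd : ¬ IsOddCycle G) :
    G.Colorable Δ := by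
  by_cases hslack : ∃ v, (G.neighborSet v).ncard < Δ
  · obtain ⟨v, hv⟩ := hslack
    exact hconn.colorable_of_ncard_neighborSet_lt hmax hv
  have hreg : ∀ v, (G.neighborSet v).ncard = Δ := fun v =>
    (hmax v).antisymm (not_lt.1 fun h => hslack ⟨v, h⟩)
  obtain ⟨x, a, b, hxa, hab, -, hxb⟩ := hconn.exists_adj_adj_not_adj_of_ne_top hclique
  have hΔ : 2 ≤ Δ := hreg a ▸ Set.ncard_pair hxb ▸
    Set.ncard_le_ncard (Set.insert_subset hxa.symm (Set.singleton_subset_iff.2 hab))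
  rcases hΔ.eq_or_lt with rfl | hΔ
  · refine hconn.colorable_two_of_even_card (fun v => (hreg v).le) (Nat.not_odd_iff_even.1 ?_)
    exact fun h => hodd ⟨hconn, hreg, Nat.card_eq_fintype_card (α := V) ▸ h⟩
  by_cases h2 : ∀ z, G.PreconnectedIn {z}ᶜ
  · obtain ⟨v, a, b, hva, hvb, hab, hne, hS⟩ :=
      hconn.exists_adj_adj_preconnectedIn_compl_pair hclique (fun v => hreg v ▸ hΔ) h2
    exact colorable_of_adj_adj_preconnectedIn hmax hva hvb hab hne hS
  · simp only [PreconnectedIn, not_forall] at h2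
    obtain ⟨z, u₁, hu₁, u₂, hu₂, h⟩ := h2
    exact hconn.colorable_of_not_reachableIn_compl_singleton hmax hu₁ hu₂ h
end

section
/- Let G be a graph containing no degree-choosable component of radius at most r, where a degree-choosable component is a 2-connected induced subgraph that is neither a clique nor an odd cycle. Then for any vertex v, the breadth-first-search tree of depth r rooted at v is unique; in particular, every vertex at distance t ≤ r from v (with t ≥ 1) has exactly one neighbor at distance t−1 from v. -/
/-!
Suppose `u`, at distance `t ≤ r` from `v`, had two neighbours at distance `t - 1`. Follow shortest
paths from `u` through each of them towards `v` up to their first common vertex, at depth `K`.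
The two paths close up into an even cycle of length `2K ≤ 2t`, and `u` is not adjacent to the
meeting vertex because their distances to `v` differ by `K ≥ 2`. The subgraph induced on the
cycle (chords only help) is therefore 2-connected, not complete, of even order, and has radius at
most `K ≤ r` around `u`: a forbidden degree-choosable component.
-/

open SimpleGraph

open Function

lemma Function.Periodic.range_eq_image_Iio {α : Type*} {f : ℕ → α} {n : ℕ}
    (hper : Periodic f n) (hn : 0 < n) : Set.range f = f '' Set.Iio n := by
  refine subset_antisymm ?_ (Set.image_subset_range _ _)
  rintro _ ⟨i, rfl⟩
  exact ⟨i % n, Nat.mod_lt i hn, hper.map_mod_nat i⟩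

lemma Function.Periodic.natCard_range {α : Type*} {f : ℕ → α} {n : ℕ} (hper : Periodic f n)
    (hn : 0 < n) (hinj : Set.InjOn f (Set.Iio n)) : Nat.card (Set.range f) = n := by
  rw [Nat.card_coe_set_eq, hper.range_eq_image_Iio hn, hinj.ncard_image,
    ← Finset.coe_range, Set.ncard_coe_finset, Finset.card_range]

lemma exists_first_agreement {α : Type*} (p q : ℕ → α) {L : ℕ} (hL : 0 < L)
    (hpq : p L = q L) (h1 : p 1 ≠ q 1) :
    ∃ K, 2 ≤ K ∧ K ≤ L ∧ p K = q K ∧ ∀ i, 0 < i → i < K → p i ≠ q i := by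
  classical
  have hex : ∃ k, 0 < k ∧ p k = q k := ⟨L, hL, hpq⟩
  obtain ⟨hK0, hK⟩ := Nat.find_spec hex
  refine ⟨Nat.find hex, ?_, Nat.find_le ⟨hL, hpq⟩, hK,
    fun i hi0 hi => (Nat.find_min hex hi ⟨hi0, ·⟩)⟩
  by_contra! hlt
  exact h1 (by rwa [show Nat.find hex = 1 by omega] at hK)

def cycleOfPaths {α : Type*} (p q : ℕ → α) (K i : ℕ) : α :=
  if i ≤ K then p i else q (2 * K - i)

section CycleOfPaths

variable {α : Type*} {p q : ℕ → α} {K i : ℕ}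

lemma cycleOfPaths_of_le (h : i ≤ K) : cycleOfPaths p q K i = p i := if_pos h

lemma cycleOfPaths_of_lt (h : K < i) : cycleOfPaths p q K i = q (2 * K - i) :=
  if_neg (not_le.mpr h)

lemma cycleOfPaths_two_mul (hK : 0 < K) : cycleOfPaths p q K (2 * K) = q 0 := by
  rw [cycleOfPaths_of_lt (by omega), Nat.sub_self]

lemma injOn_cycleOfPaths (d : α → ℕ) {L : ℕ} (hKL : K ≤ L)
    (hpd : ∀ i ≤ K, d (p i) = L - i) (hqd : ∀ i ≤ K, d (q i) = L - i)
    (hdisj : ∀ i, 0 < i → i < K → p i ≠ q i) :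
    Set.InjOn (cycleOfPaths p q K) (Set.Iio (2 * K)) := by
  have hlevel : ∀ i ≤ 2 * K, d (cycleOfPaths p q K i) = L - min i (2 * K - i) := by
    intro i hi
    rcases le_or_gt i K with h | h
    · rw [cycleOfPaths_of_le h, hpd i h]
      omega
    · rw [cycleOfPaths_of_lt h, hqd _ (by omega)]
      omega
  -- Equal levels force `j = 2K - i`, so the two values sit at the same depth on `p` and `q`.
  have hne : ∀ i j, i < j → j < 2 * K → cycleOfPaths p q K i ≠ cycleOfPaths p q K j := by
    intro i j hij hj heq
    have hd := hlevel i (by omega)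
    rw [heq, hlevel j hj.le] at hd
    have hi : 0 < i ∧ i < K ∧ 2 * K - j = i := by omega
    rw [cycleOfPaths_of_le hi.2.1.le, cycleOfPaths_of_lt (by omega), hi.2.2] at heq
    exact hdisj i hi.1 hi.2.1 heq
  intro i hi j hj heq
  rcases lt_trichotomy i j with h | h | h
  · exact absurd heq (hne i j h hj)
  · exact h
  · exact absurd heq.symm (hne j i h hi)

end CycleOfPaths

namespace SimpleGraph

variable {V : Type*} {G : SimpleGraph V}

lemma Walk.dist_getVert_of_length_eq_dist {x y : V} (P : G.Walk x y)
    (hP : P.length = G.dist x y) {i : ℕ} (hi : i ≤ P.length) :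
    G.dist (P.getVert i) y = P.length - i := by
  have hdrop : G.dist (P.getVert i) y ≤ P.length - i := P.drop_length i ▸ dist_le (P.drop i)
  have htake : G.dist x (P.getVert i) ≤ i := by
    have := dist_le (P.take i)
    rw [Walk.take_length] at this
    omega
  have := (P.take i).reachable.dist_triangle_left y
  omega

lemma dist_le_of_forall_adj_succ (g : ℕ → V) (hg : ∀ i, G.Adj (g i) (g (i + 1))) (i d : ℕ) :
    G.dist (g i) (g (i + d)) ≤ d := by
  suffices ∃ p : G.Walk (g i) (g (i + d)), p.length = d from
    let ⟨p, hp⟩ := this; (dist_le p).trans hp.le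
  induction d with
  | zero => exact ⟨.nil, rfl⟩
  | succ d ih =>
    obtain ⟨p, hp⟩ := ih
    exact ⟨p.concat (hg (i + d)), by rw [Walk.length_concat, hp]⟩

lemma connected_induce_image_Iic (g : ℕ → V) (m : ℕ)
    (hg : ∀ i < m, G.Adj (g i) (g (i + 1))) :
    (G.induce (g '' Set.Iic m)).Connected := by
  have hmem : ∀ i ≤ m, g i ∈ g '' Set.Iic m := fun i hi => ⟨i, hi, rfl⟩
  have hreach : ∀ i (hi : i ≤ m),
      (G.induce _).Reachable ⟨g 0, hmem 0 (Nat.zero_le m)⟩ ⟨g i, hmem i hi⟩ := by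
    intro i
    induction i with
    | zero => exact fun _ => .refl _
    | succ i ih =>
      exact fun hi => (ih (by omega)).trans (Adj.reachable (hg i (by omega)))
  rw [connected_iff_exists_forall_reachable]
  exact ⟨_, by rintro ⟨_, i, hi, rfl⟩; exact hreach i hi⟩

lemma induce_ne_top_of_not_adj {S : Set V} {x y : V} (hx : x ∈ S) (hy : y ∈ S) (hxy : x ≠ y)
    (hnadj : ¬ G.Adj x y) : G.induce S ≠ ⊤ := by
  intro htop
  have : (G.induce S).Adj ⟨x, hx⟩ ⟨y, hy⟩ := by
    rw [htop]
    exact fun h => hxy (congrArg Subtype.val h)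
  exact hnadj this

section PeriodicCycle

variable {f : ℕ → V} {n : ℕ}

lemma twoConnected_induce_range (hper : Periodic f n) (hinj : Set.InjOn f (Set.Iio n))
    (hadj : ∀ i, G.Adj (f i) (f (i + 1))) (hn : 3 ≤ n) :
    TwoConnected (G.induce (Set.range f)) := by
  have hS := hper.range_eq_image_Iio (by omega)
  refine ⟨(hper.natCard_range (by omega) hinj).symm ▸ hn, fun x => ?_⟩
  obtain ⟨k, hk, hx⟩ : ∃ k < n, f k = x := by
    simpa only [hS, Set.mem_image, Set.mem_Iio] using x.prop
  -- Removing `f k` leaves the path `f (k + 1), …, f (k + n - 1)`.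
  let g : ℕ → Set.range f := fun i => ⟨f (k + 1 + i), Set.mem_range_self _⟩
  have hT : {w | w ≠ x} = g '' Set.Iic (n - 2) := by
    ext w
    constructor
    · intro hw
      obtain ⟨j, hj, hwj⟩ : ∃ j < n, f j = w := by
        simpa only [hS, Set.mem_image, Set.mem_Iio] using w.prop
      have hjk : j ≠ k := by
        rintro rfl
        exact hw (Subtype.ext (hwj.symm.trans hx))
      rcases Nat.lt_or_gt_of_ne hjk with hlt | hgt
      · refine ⟨j + n - k - 1, by simp only [Set.mem_Iic]; omega, Subtype.ext ?_⟩
        rw [← hwj, ← hper j]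
        exact congrArg f (by omega)
      · refine ⟨j - k - 1, by simp only [Set.mem_Iic]; omega, Subtype.ext ?_⟩
        rw [← hwj]
        exact congrArg f (by omega)
    · rintro ⟨i, hi, rfl⟩ hgx
      have hfk : f (k + 1 + i) = f k := (congrArg Subtype.val hgx).trans hx.symm
      simp only [Set.mem_Iic] at hi
      by_cases hlt : k + 1 + i < n
      · have := hinj hlt hk hfk
        omega
      · rw [← Nat.sub_add_cancel (not_lt.mp hlt), hper] at hfk
        have := hinj (by simp only [Set.mem_Iio]; omega) hk hfk
        omega
  rw [hT]
  exact connected_induce_image_Iic g (n - 2) fun i _ => hadj (k + 1 + i)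

lemma radiusLE_range (hper : Periodic f n) (hadj : ∀ i, G.Adj (f i) (f (i + 1)))
    (hn : 0 < n) {r : ℕ} (hr : n ≤ 2 * r) : RadiusLE G (Set.range f) r := by
  let g : ℕ → Set.range f := fun i => ⟨f i, Set.mem_range_self i⟩
  have hg : ∀ i, (G.induce (Set.range f)).Adj (g i) (g (i + 1)) := hadj
  refine ⟨g 0, fun w => ?_⟩
  obtain ⟨j, hj, hwj⟩ : ∃ j < n, f j = w := by
    simpa only [hper.range_eq_image_Iio hn, Set.mem_image, Set.mem_Iio] using w.prop
  obtain rfl : g j = w := Subtype.ext hwj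
  have hfwd : (G.induce _).dist (g 0) (g j) ≤ j := by
    simpa using dist_le_of_forall_adj_succ g hg 0 j
  have hbwd : (G.induce _).dist (g j) (g 0) ≤ n - j := by
    have hwrap : g (j + (n - j)) = g 0 :=
      Subtype.ext (by simpa [Nat.add_sub_cancel' hj.le] using hper 0)
    simpa [hwrap] using dist_le_of_forall_adj_succ g hg j (n - j)
  rw [dist_comm] at hbwd
  omega

lemma isDCC_range (hper : Periodic f n) (hinj : Set.InjOn f (Set.Iio n))
    (hadj : ∀ i, G.Adj (f i) (f (i + 1))) (hn : 3 ≤ n) (heven : Even n) {a b : ℕ}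
    (hab : f a ≠ f b) (hnadj : ¬ G.Adj (f a) (f b)) : IsDCC G (Set.range f) :=
  ⟨twoConnected_induce_range hper hinj hadj hn,
    induce_ne_top_of_not_adj (Set.mem_range_self a) (Set.mem_range_self b) hab hnadj,
    fun hodd => Nat.not_odd_iff_even.mpr heven (hper.natCard_range (by omega) hinj ▸ hodd.2.2)⟩

end PeriodicCycle

lemma adj_mod_succ {F : ℕ → V} {n : ℕ} (hF : ∀ i < n, G.Adj (F i) (F (i + 1)))
    (hFn : F n = F 0) (hn : 0 < n) (i : ℕ) : G.Adj (F (i % n)) (F ((i + 1) % n)) := by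
  have hlt := Nat.mod_lt i hn
  rw [← Nat.mod_add_mod]
  rcases (show i % n + 1 ≤ n from hlt).lt_or_eq with h | h
  · rw [Nat.mod_eq_of_lt h]
    exact hF _ hlt
  · rw [h, Nat.mod_self, ← hFn]
    convert hF _ hlt using 2
    exact h.symm

lemma exists_isDCC_of_closed_walk {F : ℕ → V} {n : ℕ}
    (hF : ∀ i < n, G.Adj (F i) (F (i + 1))) (hFn : F n = F 0) (hinj : Set.InjOn F (Set.Iio n))
    (hn : 3 ≤ n) (heven : Even n)
    {a b : ℕ} (ha : a < n) (hb : b < n) (hab : a ≠ b) (hnadj : ¬ G.Adj (F a) (F b))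
    {r : ℕ} (hr : n ≤ 2 * r) : ∃ S, IsDCC G S ∧ RadiusLE G S r := by
  have hn0 : 0 < n := by omega
  let f : ℕ → V := fun i => F (i % n)
  have hper : Periodic f n := fun i => by simp only [f, Nat.add_mod_right]
  have hfF : ∀ i < n, f i = F i := fun i hi => congrArg F (Nat.mod_eq_of_lt hi)
  have hinj' : Set.InjOn f (Set.Iio n) := fun i hi j hj hij =>
    hinj hi hj ((hfF i hi).symm.trans (hij.trans (hfF j hj)))
  have hadj : ∀ i, G.Adj (f i) (f (i + 1)) := adj_mod_succ hF hFn hn0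
  refine ⟨Set.range f, isDCC_range hper hinj' hadj hn heven (a := a) (b := b) ?_ ?_,
    radiusLE_range hper hadj hn0 hr⟩
  · rw [hfF a ha, hfF b hb]
    exact hinj.ne ha hb hab
  · rwa [hfF a ha, hfF b hb]

lemma adj_cycleOfPaths {p q : ℕ → V} {K : ℕ} (hp : ∀ i < K, G.Adj (p i) (p (i + 1)))
    (hq : ∀ i < K, G.Adj (q i) (q (i + 1))) (hpq : p K = q K) :
    ∀ i < 2 * K, G.Adj (cycleOfPaths p q K i) (cycleOfPaths p q K (i + 1)) := by
  intro i hi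
  rcases lt_or_ge i K with h | h
  · rw [cycleOfPaths_of_le h.le, cycleOfPaths_of_le h]
    exact hp i h
  · have hq' := (hq (2 * K - (i + 1)) (by omega)).symm
    rw [show 2 * K - (i + 1) + 1 = 2 * K - i by omega] at hq'
    rw [cycleOfPaths_of_lt (by omega : K < i + 1)]
    rcases h.eq_or_lt with rfl | h
    · rw [cycleOfPaths_of_le le_rfl, hpq]
      rwa [show 2 * K - K = K by omega] at hq'
    · rwa [cycleOfPaths_of_lt h]

lemma exists_isDCC_of_two_geodesics {u v : V} (P Q : G.Walk u v) (hP : P.length = G.dist u v)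
    (hQ : Q.length = G.dist u v) (hPQ : P.getVert 1 ≠ Q.getVert 1) :
    ∃ S, IsDCC G S ∧ RadiusLE G S (G.dist u v) := by
  set L := G.dist u v
  have hlevel : ∀ R : G.Walk u v, R.length = L → ∀ i ≤ L, G.dist (R.getVert i) v = L - i :=
    fun R hR i hi => hR ▸ R.dist_getVert_of_length_eq_dist hR (hR ▸ hi)
  have hL : 0 < L := by
    by_contra! h0
    exact hPQ ((P.getVert_of_length_le (by omega)).trans (Q.getVert_of_length_le (by omega)).symm)
  obtain ⟨K, hK2, hKL, hmeet, hdisj⟩ := exists_first_agreement P.getVert Q.getVert hL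
    ((P.getVert_of_length_le hP.le).trans (Q.getVert_of_length_le hQ.le).symm) hPQ
  set F := cycleOfPaths P.getVert Q.getVert K
  have hinj : Set.InjOn F (Set.Iio (2 * K)) := injOn_cycleOfPaths (G.dist · v) hKL
    (fun i hi => hlevel P hP i (by omega)) (fun i hi => hlevel Q hQ i (by omega)) hdisj
  have hnadj : ¬ G.Adj (F 0) (F K) := by
    intro hadj
    have h0 : G.dist v (F 0) = L := by
      rw [dist_comm, show F 0 = P.getVert 0 from cycleOfPaths_of_le (Nat.zero_le K),
        hlevel P hP 0 (Nat.zero_le L), Nat.sub_zero]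
    have hK : G.dist v (F K) = L - K := by
      rw [dist_comm, show F K = P.getVert K from cycleOfPaths_of_le le_rfl, hlevel P hP K hKL]
    rcases hadj.diff_dist_adj (u := v) with h | h | h <;> omega
  refine exists_isDCC_of_closed_walk (adj_cycleOfPaths ?_ ?_ hmeet) ?_ hinj (by omega)
    (even_two_mul K) (by omega) (by omega) (by omega) hnadj (by omega)
  · exact fun i hi => P.adj_getVert_succ (by omega)
  · exact fun i hi => Q.adj_getVert_succ (by omega)
  · rw [cycleOfPaths_two_mul (by omega), cycleOfPaths_of_le (Nat.zero_le K), Walk.getVert_zero,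
      Walk.getVert_zero]

end SimpleGraph

theorem stmt3_general {V : Type*} (G : SimpleGraph V) (r : ℕ)
    (h : NoSmallDCC G r) (v u : V) (t : ℕ) (ht1 : 1 ≤ t) (htr : t ≤ r)
    (hu : G.dist v u = t) :
    ∃! w : V, G.Adj u w ∧ G.dist v w = t - 1 := by
  have hut : G.dist u v = t := dist_comm.trans hu
  have huv : G.Reachable u v := Reachable.of_dist_ne_zero (by omega)
  obtain ⟨P, hP⟩ := huv.exists_walk_length_eq_dist
  have hP1 := P.dist_getVert_of_length_eq_dist hP (i := 1) (by omega)
  refine ⟨P.getVert 1, ⟨by simpa using P.adj_getVert_succ (i := 0) (by omega), ?_⟩, ?_⟩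
  · rw [dist_comm, hP1, hP, hut]
  rintro w ⟨huw, hw⟩
  by_contra hne
  obtain ⟨Q, hQ⟩ := (huw.symm.reachable.trans huv).exists_walk_length_eq_dist
  have hwv : G.dist w v = t - 1 := dist_comm.trans hw
  obtain ⟨S, hS, hrad⟩ := exists_isDCC_of_two_geodesics P (.cons huw Q) hP
    (by rw [Walk.length_cons, hQ, hwv, hut]; omega) (by simpa using Ne.symm hne)
  obtain ⟨c, hc⟩ := hrad
  exact h S hS ⟨c, fun x => (hc x).trans (hut ▸ htr)⟩

/-- Unique BFS tree: in a graph with no degree-choosable component of radius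
at most r, every vertex at distance t ∈ [1,r] from v has exactly one neighbor
at distance t-1 from v. -/
theorem stmt3 {V : Type*} [Fintype V] (G : SimpleGraph V) (r : ℕ)
    (h : NoSmallDCC G r) (v u : V) (t : ℕ) (ht1 : 1 ≤ t) (htr : t ≤ r)
    (hu : G.dist v u = t) :
    ∃! w : V, G.Adj u w ∧ G.dist v w = t - 1 :=
  stmt3_general G r h v u t ht1 htr hu
end

section
/- Let G be a graph with no degree-choosable component of radius 1. Then for every vertex v, every connected component of the subgraph of G induced by the neighborhood N(v) is a complete graph. -/
open SimpleGraph

/-- A graph with a vertex adjacent to all other vertices is connected. -/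
lemma aux_connected_of_center {W : Type*} (H : SimpleGraph W) (c : W)
    (hc : ∀ w, w = c ∨ H.Adj c w) : H.Connected := by
  rw [connected_iff]
  have h1 : ∀ u, H.Reachable c u := by
    intro u
    rcases hc u with rfl | ha
    · exact Reachable.refl _
    · exact ha.reachable
  exact ⟨fun u w => (h1 u).symm.trans (h1 w), ⟨c⟩⟩

/-- Along a walk between non-adjacent distinct vertices there is an induced path on 3 vertices. -/
lemma aux_triple {W : Type*} (H : SimpleGraph W) {a b : W} (p : H.Walk a b) :
    a = b ∨ H.Adj a b ∨ ∃ x y z, H.Adj x y ∧ H.Adj y z ∧ ¬ H.Adj x z ∧ x ≠ z := by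
  induction p with
  | nil => exact Or.inl rfl
  | @cons a c b hac q ih =>
    rcases ih with rfl | hcb | ⟨x, y, z, hxy, hyz, hxz, hne⟩
    · exact Or.inr (Or.inl hac)
    · by_cases hab : a = b
      · exact Or.inl hab
      · by_cases hadj : H.Adj a b
        · exact Or.inr (Or.inl hadj)
        · exact Or.inr (Or.inr ⟨a, c, b, hac, hcb, hadj, hab⟩)
    · exact Or.inr (Or.inr ⟨x, y, z, hxy, hyz, hxz, hne⟩)

lemma aux_connected_del {V : Type*} (G : SimpleGraph V) (S : Set V) (t : ↥S) (c : V)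
    (hc : c ∈ S) (hct : c ≠ ↑t)
    (hadj : ∀ w ∈ S, w ≠ ↑t → w ≠ c → G.Adj c w) :
    ((G.induce S).induce {w : ↥S | w ≠ t}).Connected := by
  refine aux_connected_of_center _ ⟨⟨c, hc⟩, fun h => hct (congrArg Subtype.val h)⟩ ?_
  intro w
  by_cases hw : (w : ↥S) = ⟨c, hc⟩
  · exact Or.inl (Subtype.ext hw)
  · refine Or.inr ?_
    have : G.Adj c ↑↑w :=
      hadj _ (w : ↥S).2 (fun h => w.2 (Subtype.ext h)) (fun h => hw (Subtype.ext h))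
    exact this.symm.symm

/-- If G has no DCC of radius 1, then every connected component of the
subgraph induced by any neighborhood N(v) is a clique: any two distinct
reachable vertices of the induced graph are adjacent. -/
theorem stmt5 {V : Type*} [Fintype V] (G : SimpleGraph V)
    (h : NoSmallDCC G 1) (v : V) (a b : G.neighborSet v)
    (hr : (G.induce (G.neighborSet v)).Reachable a b) :
    a = b ∨ (G.induce (G.neighborSet v)).Adj a b := by
  classical
  obtain ⟨p⟩ := hr
  rcases aux_triple _ p with heq | hadj | ⟨x, y, z, hxy, hyz, hxz, hne⟩
  · exact Or.inl heq
  · exact Or.inr hadj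
  exfalso
  -- lift everything to G
  have hvx : G.Adj v ↑x := x.2
  have hvy : G.Adj v ↑y := y.2
  have hvz : G.Adj v ↑z := z.2
  have hxy' : G.Adj ↑x ↑y := hxy
  have hyz' : G.Adj ↑y ↑z := hyz
  have hxz' : ¬ G.Adj ↑x ↑z := hxz
  have hne' : (↑x : V) ≠ ↑z := fun hh => hne (Subtype.ext hh)
  have hvx' : v ≠ ↑x := hvx.ne
  have hvy' : v ≠ ↑y := hvy.ne
  have hvz' : v ≠ ↑z := hvz.ne
  have hxy'' : (↑x : V) ≠ ↑y := hxy'.ne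
  have hyz'' : (↑y : V) ≠ ↑z := hyz'.ne
  set S : Set V := {v, ↑x, ↑y, ↑z} with hS
  have hvS : v ∈ S := by simp [hS]
  have hxS : (↑x : V) ∈ S := by simp [hS]
  have hyS : (↑y : V) ∈ S := by simp [hS]
  have hzS : (↑z : V) ∈ S := by simp [hS]
  have hmem : ∀ w : V, w ∈ S → w = v ∨ w = ↑x ∨ w = ↑y ∨ w = ↑z := by
    intro w hw
    simpa [hS] using hw
  refine h S ⟨⟨?_, ?_⟩, ?_, ?_⟩ ?_
  · -- 3 ≤ Nat.card ↥S
    have : S.ncard = 4 := by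
      rw [hS, Set.ncard_insert_of_notMem (by simp [hvx', hvy', hvz']),
        Set.ncard_insert_of_notMem (by simp [hxy'', hne']),
        Set.ncard_insert_of_notMem (by simp [hyz'']), Set.ncard_singleton]
    rw [Nat.card_coe_set_eq, this]
    omega
  · -- delete any vertex, remains connected
    intro t
    rcases hmem _ t.2 with ht | ht | ht | ht
    · -- remove v, center y
      refine aux_connected_del G S t ↑y hyS (by rw [ht]; exact hvy'.symm) ?_
      intro w hw hwt hwy
      rcases hmem w hw with rfl | rfl | rfl | rfl
      · exact absurd ht.symm hwt
      · exact hxy'.symm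
      · exact absurd rfl hwy
      · exact hyz'
    · -- remove x, center v
      refine aux_connected_del G S t v hvS (by rw [ht]; exact hvx') ?_
      intro w hw hwt hwv
      rcases hmem w hw with rfl | rfl | rfl | rfl
      · exact absurd rfl hwv
      · exact hvx
      · exact hvy
      · exact hvz
    · refine aux_connected_del G S t v hvS (by rw [ht]; exact hvy') ?_
      intro w hw hwt hwv
      rcases hmem w hw with rfl | rfl | rfl | rfl
      · exact absurd rfl hwv
      · exact hvx
      · exact hvy
      · exact hvz
    · refine aux_connected_del G S t v hvS (by rw [ht]; exact hvz') ?_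
      intro w hw hwt hwv
      rcases hmem w hw with rfl | rfl | rfl | rfl
      · exact absurd rfl hwv
      · exact hvx
      · exact hvy
      · exact hvz
  · -- not complete
    intro heq
    have h2 : (G.induce S).Adj ⟨↑x, hxS⟩ ⟨↑z, hzS⟩ := by
      rw [heq]
      simp [Subtype.ext_iff, hne']
    exact hxz' h2
  · -- not an odd cycle: vertex v has degree 3
    rintro ⟨-, hdeg, -⟩
    have hsub : ({⟨↑x, hxS⟩, ⟨↑y, hyS⟩, ⟨↑z, hzS⟩} : Set ↥S) ⊆
        (G.induce S).neighborSet ⟨v, hvS⟩ := by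
      rintro w (rfl | rfl | rfl)
      · exact hvx
      · exact hvy
      · exact hvz
    have h3 : ({⟨↑x, hxS⟩, ⟨↑y, hyS⟩, ⟨↑z, hzS⟩} : Set ↥S).ncard = 3 := by
      rw [Set.ncard_insert_of_notMem (by simp [Subtype.ext_iff, hxy'', hne']),
        Set.ncard_insert_of_notMem (by simp [Subtype.ext_iff, hyz'']),
        Set.ncard_singleton]
    have := Set.ncard_le_ncard hsub (Set.toFinite _)
    rw [hdeg ⟨v, hvS⟩, h3] at this
    omega
  · -- radius ≤ 1
    refine ⟨⟨v, hvS⟩, fun w => ?_⟩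
    by_cases hw : w = ⟨v, hvS⟩
    · subst hw; rw [SimpleGraph.dist_self]; omega
    · have : G.Adj v ↑w := by
        rcases hmem _ w.2 with hww | hww | hww | hww
        · exact absurd (Subtype.ext hww) hw
        · rw [hww]; exact hvx
        · rw [hww]; exact hvy
        · rw [hww]; exact hvz
      have hadj : (G.induce S).Adj ⟨v, hvS⟩ w := this
      calc (G.induce S).dist ⟨v, hvS⟩ w ≤ hadj.toWalk.length := dist_le _
        _ = 1 := rfl
end

section
/- Let G be a graph with no degree-choosable component of radius at most r, let v be a vertex, and let u, u' be distinct vertices at distance t ≤ r−1 from v (level t of the BFS tree). Then u and u' cannot have a common neighbor w at distance t+1 from v; equivalently, each vertex at level t+1 has exactly one neighbor at level t. -/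
open SimpleGraph

/-
Take geodesics from `v` to `u` and to `u'`, and let `z` be a common vertex of them farthest from
`v`. The two geodesic segments from `z` meet only in `z`, so closing them up through the common
neighbour `w` gives a cycle of even length `2 (t - dist v z) + 2`, hence of radius at most
`t + 1 ≤ r` around `z`. Its vertex set induces a 2-connected graph (chords cannot disconnect a
cycle) with an even number of vertices, which is not complete because `z` and `w` are more than
one level apart: a degree-choosable component of radius at most `r`.
-/

namespace SimpleGraph

variable {V : Type*} {G : SimpleGraph V}

lemma Walk.length_induce {s : Set V} {x y : V} (p : G.Walk x y) (hp : ∀ z ∈ p.support, z ∈ s) :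
    (p.induce s hp).length = p.length := by
  rw [← length_map (Embedding.induce s).toHom, map_induce]
  rfl

lemma Walk.dist_induce_le {s : Set V} {x y : V} (p : G.Walk x y) (hp : ∀ z ∈ p.support, z ∈ s) :
    (G.induce s).dist ⟨x, hp x p.start_mem_support⟩ ⟨y, hp y p.end_mem_support⟩ ≤ p.length :=
  p.length_induce hp ▸ dist_le (p.induce s hp)

lemma connected_induce_induce_ne {s : Set V} {a : s} (h : (G.induce (s \ {(a : V)})).Connected) :
    ((G.induce s).induce {b | b ≠ a}).Connected := by
  refine h.map ⟨fun x => ⟨⟨x.1, x.2.1⟩, fun hx => x.2.2 (congrArg Subtype.val hx)⟩, id⟩ ?_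
  rintro ⟨⟨x, hxs⟩, hxa⟩
  exact ⟨⟨x, hxs, fun hx => hxa (Subtype.ext hx)⟩, rfl⟩

namespace Walk

variable {z : V}

lemma IsCycle.connected_induce_support_diff {c : G.Walk z z} (hc : c.IsCycle) {a : V}
    (ha : a ∈ c.support) : (G.induce ({x | x ∈ c.support} \ {a})).Connected := by
  classical
  set d := c.rotate a ha
  have hd : d.IsCycle := hc.rotate ha
  have hdt : ¬ d.tail.Nil := by
    rw [← length_eq_zero_iff, ← Nat.add_right_cancel_iff (n := 1), length_tail_add_one hd.not_nil]
    have := hd.three_le_length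
    omega
  have hpath : d.tail.IsPath := hd.isPath_tail
  -- the rotated cycle at `a`, with both copies of `a` dropped, is a path through all other vertices
  set P := d.tail.dropLast
  have hsupp : d.tail.support = P.support ++ [a] := by
    rw [← support_concat _ (adj_penultimate hdt), concat_dropLast]
  have hset : {x | x ∈ c.support} \ {a} = {x | x ∈ P.support} := by
    ext x
    have hnd := hsupp ▸ hpath.support_nodup
    simp only [Set.mem_sdiff, Set.mem_ofPred_eq, Set.mem_singleton_iff]
    rw [← mem_support_rotate_iff c a ha, ← cons_support_tail hd.not_nil, hsupp]
    simp only [List.mem_cons, List.mem_append]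
    grind
  rw [hset]
  exact P.connected_induce_support

lemma IsCycle.natCard_support {c : G.Walk z z} (hc : c.IsCycle) :
    Nat.card {x | x ∈ c.support} = c.length := by
  classical
  have hset : {x | x ∈ c.support} = ↑c.support.tail.toFinset := by
    ext x
    rw [Set.mem_ofPred_eq, List.coe_toFinset, Set.mem_ofPred_eq, ← cons_support_tail hc.not_nil,
      List.mem_cons, support_tail_of_not_nil _ hc.not_nil]
    exact or_iff_right_of_imp fun hx => hx ▸ c.end_mem_tail_support hc.not_nil
  rw [hset, Nat.card_coe_set_eq, Set.ncard_coe_finset,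
    List.toFinset_card_of_nodup hc.support_nodup, List.length_tail, length_support,
    Nat.add_sub_cancel]

lemma IsCycle.twoConnected_induce_support {c : G.Walk z z} (hc : c.IsCycle) :
    TwoConnected (G.induce {x | x ∈ c.support}) :=
  ⟨hc.natCard_support ▸ hc.three_le_length,
    fun a => connected_induce_induce_ne (hc.connected_induce_support_diff a.2)⟩

lemma radiusLE_support (c : G.Walk z z) : RadiusLE G {x | x ∈ c.support} (c.length / 2) := by
  classical
  refine ⟨⟨z, c.start_mem_support⟩, ?_⟩
  rintro ⟨x, hx⟩
  have hsplit : (c.takeUntil x hx).length + (c.dropUntil x hx).length = c.length := by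
    rw [← length_append, take_spec]
  have hto := (c.takeUntil x hx).dist_induce_le (s := {x | x ∈ c.support}) fun y hy =>
    c.support_takeUntil_subset_support hx hy
  have hfro := (c.dropUntil x hx).reverse.dist_induce_le (s := {x | x ∈ c.support}) fun y hy =>
    c.support_dropUntil_subset_support hx (by simpa using hy)
  rw [length_reverse] at hfro
  omega

lemma IsCycle.isDCC {c : G.Walk z z} (hc : c.IsCycle) (heven : Even c.length) {x y : V}
    (hx : x ∈ c.support) (hy : y ∈ c.support) (hxy : x ≠ y) (hnadj : ¬ G.Adj x y) :
    IsDCC G {v | v ∈ c.support} := by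
  refine ⟨hc.twoConnected_induce_support, fun htop => hnadj ?_, fun hodd => ?_⟩
  · have : (G.induce {v | v ∈ c.support}).Adj ⟨x, hx⟩ ⟨y, hy⟩ := by
      rw [htop, top_adj, ne_eq, Subtype.mk.injEq]
      exact hxy
    simpa using this
  · have hodd := hodd.2.2
    rw [hc.natCard_support, ← Nat.not_even_iff_odd] at hodd
    exact hodd heven

lemma IsPath.isCycle_append_cons_cons_reverse {u u' w : V} {Q : G.Walk z u} {Q' : G.Walk z u'}
    (hQ : Q.IsPath) (hQ' : Q'.IsPath) (hdisj : ∀ x ∈ Q.support, x ∈ Q'.support → x = z)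
    (hu : u ∉ Q'.support) (hwQ : w ∉ Q.support) (hwQ' : w ∉ Q'.support)
    (h1 : G.Adj u w) (h2 : G.Adj u' w) :
    (Q.append (cons h1 (cons h2.symm Q'.reverse))).IsCycle := by
  have hback : (cons h1 (cons h2.symm Q'.reverse)).IsPath := by
    refine (cons_isPath_iff _ _).mpr
      ⟨(cons_isPath_iff _ _).mpr ⟨hQ'.reverse, by simpa using hwQ'⟩, ?_⟩
    simpa [h1.ne] using hu
  refine hQ.isCycle_append hback ?_ (Or.inr (by simp))
  have hz : z ∉ Q.support.tail := by
    have := hQ.support_nodup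
    rw [← cons_tail_support, List.nodup_cons] at this
    exact this.1
  intro x hx hx'
  have hxQ : x ∈ Q.support := List.mem_of_mem_tail hx
  simp only [support_cons, List.tail_cons, List.mem_cons, support_reverse, List.mem_reverse] at hx'
  rcases hx' with rfl | hxQ'
  · exact hwQ hxQ
  · exact hz (hdisj x hxQ hxQ' ▸ hx)

section Geodesic

variable [DecidableEq V] {v y : V} {p : G.Walk v y}

lemma dist_eq_dist_add_dist_of_mem_dropUntil (hp : p.length = G.dist v y) {z x : V}
    (hz : z ∈ p.support) (hx : x ∈ (p.dropUntil z hz).support) :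
    G.dist v x = G.dist v z + G.dist z x := by
  set q := p.dropUntil z hz
  have hsub : ((p.takeUntil z hz).append (q.takeUntil x hx)).IsSubwalk p :=
    ⟨nil, q.dropUntil x hx, by rw [nil_append, ← append_assoc, take_spec, take_spec]⟩
  have hvx := length_eq_dist_of_subwalk hp hsub
  have hvz := length_eq_dist_of_subwalk hp (p.isSubwalk_takeUntil hz)
  have hzx := length_eq_dist_of_subwalk hp
    ((q.isSubwalk_takeUntil hx).trans (p.isSubwalk_dropUntil hz))
  rw [length_append] at hvx
  omega

lemma exists_mem_support_dropUntil_inter_eq {y' : V} {p' : G.Walk v y'}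
    (hp : p.length = G.dist v y) :
    ∃ z, ∃ (hz : z ∈ p.support) (hz' : z ∈ p'.support),
      ∀ x ∈ (p.dropUntil z hz).support, x ∈ (p'.dropUntil z hz').support → x = z := by
  obtain ⟨z, hzp, hmax⟩ :=
    (p.support.toFinset ∩ p'.support.toFinset).exists_max_image (G.dist v) ⟨v, by simp⟩
  simp only [Finset.mem_inter, List.mem_toFinset] at hzp hmax
  refine ⟨z, hzp.1, hzp.2, fun x hx hx' => ?_⟩
  have hlevel := dist_eq_dist_add_dist_of_mem_dropUntil hp hzp.1 hx
  have := hmax x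
    ⟨p.support_dropUntil_subset_support _ hx, p'.support_dropUntil_subset_support _ hx'⟩
  exact (((p.dropUntil z hzp.1).takeUntil x hx).reachable.dist_eq_zero_iff.mp (by omega)).symm

end Geodesic

end Walk

open Walk in
theorem exists_isCycle_of_adj_of_dist_eq {v u u' w : V} {t : ℕ} (hu : G.dist v u = t)
    (hu' : G.dist v u' = t) (hne : u ≠ u') (hw : G.dist v w = t + 1) (h1 : G.Adj u w)
    (h2 : G.Adj u' w) :
    ∃ z, ∃ c : G.Walk z z, c.IsCycle ∧ w ∈ c.support ∧ c.length + 2 * G.dist v z = 2 * t + 2 := by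
  classical
  have hvw : G.Reachable v w := Reachable.of_dist_ne_zero (by omega)
  obtain ⟨p, hp⟩ := (hvw.trans h1.symm.reachable).exists_walk_length_eq_dist
  obtain ⟨p', hp'⟩ := (hvw.trans h2.symm.reachable).exists_walk_length_eq_dist
  obtain ⟨z, hz, hz', hdisj⟩ := exists_mem_support_dropUntil_inter_eq (p' := p') hp
  set Q := p.dropUntil z hz
  set Q' := p'.dropUntil z hz'
  have hQ : Q.length = G.dist z u := length_eq_dist_of_subwalk hp (p.isSubwalk_dropUntil hz)
  have hQ' : Q'.length = G.dist z u' := length_eq_dist_of_subwalk hp' (p'.isSubwalk_dropUntil hz')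
  have hzu := dist_eq_dist_add_dist_of_mem_dropUntil hp hz Q.end_mem_support
  have hzu' := dist_eq_dist_add_dist_of_mem_dropUntil hp' hz' Q'.end_mem_support
  have hwQ : w ∉ Q.support := fun hwQ => by
    have := (dist_le _).trans
      (p.length_takeUntil_le_length (p.support_dropUntil_subset_support hz hwQ))
    omega
  have hwQ' : w ∉ Q'.support := fun hwQ' => by
    have := (dist_le _).trans
      (p'.length_takeUntil_le_length (p'.support_dropUntil_subset_support hz' hwQ'))
    omega
  have huQ' : u ∉ Q'.support := fun huQ' => by
    obtain rfl := hdisj u Q.end_mem_support huQ'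
    exact hne (Q'.reachable.dist_eq_zero_iff.mp (by omega))
  refine ⟨z, _, (Q.isPath_of_length_eq_dist hQ).isCycle_append_cons_cons_reverse
    (Q'.isPath_of_length_eq_dist hQ') hdisj huQ' hwQ hwQ' h1 h2, by simp, ?_⟩
  simp only [length_append, length_cons, length_reverse]
  omega

end SimpleGraph

theorem stmt11_general {V : Type*} (G : SimpleGraph V) (r : ℕ)
    (h : NoSmallDCC G r) (v u u' w : V) (t : ℕ) (htr : t + 1 ≤ r)
    (hu : G.dist v u = t) (hu' : G.dist v u' = t) (hne : u ≠ u')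
    (hw : G.dist v w = t + 1) (h1 : G.Adj u w) (h2 : G.Adj u' w) :
    False := by
  obtain ⟨z, c, hc, hwc, hlen⟩ := exists_isCycle_of_adj_of_dist_eq hu hu' hne hw h1 h2
  have hshort := hc.three_le_length
  have hzw : ¬ G.Adj z w := fun hzw => by
    have := hzw.reachable.dist_triangle_right v
    rw [dist_eq_one_iff_adj.mpr hzw] at this
    omega
  have hzw_ne : z ≠ w := by
    rintro rfl
    omega
  refine h _ (hc.isDCC ⟨t + 1 - G.dist v z, by omega⟩ c.start_mem_support hwc hzw_ne hzw) ?_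
  obtain ⟨center, hcenter⟩ := Walk.radiusLE_support c
  exact ⟨center, fun x => (hcenter x).trans (by omega)⟩

/-- Two distinct vertices at the same BFS level t ≤ r-1 cannot share a common
neighbor at level t+1 when there is no DCC of radius at most r. -/
theorem stmt11 {V : Type*} [Fintype V] (G : SimpleGraph V) (r : ℕ)
    (h : NoSmallDCC G r) (v u u' w : V) (t : ℕ) (htr : t + 1 ≤ r)
    (hu : G.dist v u = t) (hu' : G.dist v u' = t) (hne : u ≠ u')
    (hw : G.dist v w = t + 1) (h1 : G.Adj u w) (h2 : G.Adj u' w) :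
    False :=
  stmt11_general G r h v u u' w t htr hu hu' hne hw h1 h2
end

section
/- Let G be a graph with maximum degree Δ, partially properly colored with colors from {1,…,Δ}, and let B_1,…,B_s be a partition of the uncolored vertices such that every vertex in B_i (i ≥ 2) has at least one neighbor in B_{i−1}, and every vertex of B_1 has an uncolored neighbor outside B_1 ∪ … ∪ B_s or a neighbor in B_0 (an uncolored set). Then for each i from s down to 1, assigning each v ∈ B_i the list L(v) = {1,…,Δ} minus the colors of its already-colored neighbors yields |L(v)| ≥ deg_{G[B_i]}(v) + 1; hence by greedy list coloring, all layers B_s,…,B_1 can be properly Δ-colored consistently with the existing partial coloring. -/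
open SimpleGraph

/-!
Colour the uncoloured vertices greedily, layer `B s` first and `B 1` last. When a vertex
`v ∈ B i` is coloured, its neighbour in `B (i - 1)` (or, for `i = 1`, its uncoloured neighbour
outside the layers) is still uncoloured, so at most `Δ - 1` colours are blocked at `v` and one
of the `Δ` colours is free.
-/

namespace SimpleGraph

variable {V : Type*} (G : SimpleGraph V)

/-- `c v = none` means that `v` is uncoloured. -/
structure IsPartialColoring (Δ : ℕ) (c : V → Option ℕ) : Prop where
  lt : ∀ v a, c v = some a → a < Δ
  proper : ∀ u w, G.Adj u w → c u = c w → c u = none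

variable {G}

lemma exists_lt_forall_adj_ne_some [Finite V] {Δ : ℕ} {u v : V}
    (hmax : (G.neighborSet v).ncard ≤ Δ) (c : V → Option ℕ) (huv : G.Adj v u) (hu : c u = none) :
    ∃ a < Δ, ∀ w, G.Adj v w → c w ≠ some a := by
  classical
  have hfin := (G.neighborSet v).toFinite
  set blocked := (hfin.toFinset.erase u).image c
  have hblocked : blocked.card < ((Finset.range Δ).map Function.Embedding.some).card := by
    have hu_mem : u ∈ hfin.toFinset := by simpa using huv
    rw [Set.ncard_eq_toFinset_card _ hfin] at hmax
    calc blocked.card ≤ (hfin.toFinset.erase u).card := Finset.card_image_le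
      _ < hfin.toFinset.card := Finset.card_erase_lt_of_mem hu_mem
      _ ≤ _ := by simpa using hmax
  obtain ⟨_, ha, ha_free⟩ := Finset.exists_mem_notMem_of_card_lt_card hblocked
  obtain ⟨a, ha_lt, rfl⟩ := by simpa using ha
  refine ⟨a, ha_lt, fun w hvw hw => ?_⟩
  have hwu : w ≠ u := by rintro rfl; simp [hu] at hw
  exact ha_free (Finset.mem_image.2 ⟨w, by simpa [hwu] using hvw, hw⟩)

namespace IsPartialColoring

variable {Δ : ℕ} {c : V → Option ℕ}

lemma update [DecidableEq V] {v : V} {a : ℕ} (hc : G.IsPartialColoring Δ c) (ha : a < Δ)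
    (hfree : ∀ w, G.Adj v w → c w ≠ some a) :
    G.IsPartialColoring Δ (Function.update c v (some a)) where
  lt w b hw := by
    rcases eq_or_ne w v with rfl | hwv
    · simp_all
    · exact hc.lt w b (by simpa [hwv] using hw)
  proper x y hxy hcxy := by
    rcases eq_or_ne x v with rfl | hxv
    · exact absurd (by simpa [hxy.ne'] using hcxy.symm) (hfree y hxy)
    rcases eq_or_ne y v with rfl | hyv
    · exact absurd (by simpa [hxy.ne] using hcxy) (hfree x hxy.symm)
    simp only [Function.update_of_ne hxv, Function.update_of_ne hyv] at hcxy ⊢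
    exact hc.proper x y hxy hcxy

/-- Vertices of `S` of larger rank are coloured first, so the neighbour `u` promised to `v` is
still uncoloured when `v` gets its colour. -/
theorem exists_extend_of_rank [Finite V] {β : Type*} [LinearOrder β]
    (hmax : ∀ v, (G.neighborSet v).ncard ≤ Δ) (hc : G.IsPartialColoring Δ c)
    (S : Finset V) (r : V → β)
    (hS : ∀ v ∈ S, ∃ u, G.Adj v u ∧ c u = none ∧ (u ∈ S → r u < r v)) :
    ∃ c', G.IsPartialColoring Δ c' ∧ (∀ v ∉ S, c' v = c v) ∧ ∀ v ∈ S, c' v ≠ none := by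
  classical
  induction S using Finset.induction_on_max_value r generalizing c with
  | empty => exact ⟨c, hc, fun _ _ => rfl, by simp⟩
  | insert v S hvS hr_le ih =>
    obtain ⟨u, huv, hu, -⟩ := hS v (Finset.mem_insert_self v S)
    obtain ⟨a, ha, hfree⟩ := exists_lt_forall_adj_ne_some (hmax v) c huv hu
    have hS' : ∀ w ∈ S, ∃ u, G.Adj w u ∧ Function.update c v (some a) u = none ∧
        (u ∈ S → r u < r w) := by
      intro w hw
      obtain ⟨u, hwu, hu, hlt⟩ := hS w (Finset.mem_insert_of_mem hw)
      have huv : u ≠ v := by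
        rintro rfl
        exact (hlt (Finset.mem_insert_self u S)).not_ge (hr_le w hw)
      exact ⟨u, hwu, by simpa [huv] using hu, fun huS => hlt (Finset.mem_insert_of_mem huS)⟩
    obtain ⟨c', hc', hout, hcol⟩ := ih (hc.update ha hfree) hS'
    refine ⟨c', hc', fun w hw => ?_, ?_⟩
    · rw [Finset.mem_insert, not_or] at hw
      simpa [hw.1] using hout w hw.2
    · simp only [Finset.mem_insert, forall_eq_or_imp]
      exact ⟨by simp [hout v hvS], hcol⟩

end IsPartialColoring

end SimpleGraph

lemma Nat.findGreatest_eq_of_mem_of_disjoint {V : Type*} {B : ℕ → Set V} {s i : ℕ} {v : V}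
    [DecidablePred fun j => v ∈ B j]
    (hdisj : ∀ i ≤ s, ∀ j ≤ s, i ≠ j → Disjoint (B i) (B j)) (hi : i ≤ s) (hv : v ∈ B i) :
    Nat.findGreatest (fun j => v ∈ B j) s = i := by
  by_contra hne
  exact (hdisj _ (Nat.findGreatest_le s) i hi hne).ne_of_mem
    (Nat.findGreatest_spec (P := fun j => v ∈ B j) hi hv) hv rfl

/-- Correctness of the layering technique: the uncolored layers B_s,…,B_1 can
be properly Δ-colored consistently with the existing partial coloring. -/
theorem stmt13 {V : Type*} [Fintype V] (G : SimpleGraph V) (Δ s : ℕ)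
    (hmax : ∀ v, (G.neighborSet v).ncard ≤ Δ)
    (c₀ : V → Option ℕ)
    (hc₀col : ∀ v a, c₀ v = some a → a < Δ)
    (hc₀proper : ∀ u w, G.Adj u w → c₀ u = c₀ w → c₀ u = none)
    (B : ℕ → Set V)
    (huncol : ∀ i ≤ s, ∀ v ∈ B i, c₀ v = none)
    (hdisj : ∀ i ≤ s, ∀ j ≤ s, i ≠ j → Disjoint (B i) (B j))
    (hlayer : ∀ i, 2 ≤ i → i ≤ s → ∀ v ∈ B i, ∃ u ∈ B (i - 1), G.Adj v u)
    (hbase : ∀ v ∈ B 1, ∃ u, G.Adj v u ∧ c₀ u = none ∧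
        ∀ i, 1 ≤ i → i ≤ s → u ∉ B i) :
    ∃ c : V → Option ℕ,
      (∀ v a, c v = some a → a < Δ) ∧
      (∀ u w, G.Adj u w → c u = c w → c u = none) ∧
      (∀ v, (∀ i, 1 ≤ i → i ≤ s → v ∉ B i) → c v = c₀ v) ∧
      (∀ i, 1 ≤ i → i ≤ s → ∀ v ∈ B i, ∃ a, c v = some a ∧ a < Δ) := by
  classical
  set S := Finset.univ.filter fun v => ∃ i, 1 ≤ i ∧ i ≤ s ∧ v ∈ B i
  -- rank a vertex of `S` by its layer index, which `Nat.findGreatest` reads off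
  have hrank : ∀ v ∈ S, ∃ u, G.Adj v u ∧ c₀ u = none ∧
      (u ∈ S → Nat.findGreatest (fun j => u ∈ B j) s <
        Nat.findGreatest (fun j => v ∈ B j) s) := by
    intro v hv
    obtain ⟨i, hi1, his, hvi⟩ := by simpa [S] using hv
    obtain rfl | hi2 : i = 1 ∨ 2 ≤ i := by omega
    · obtain ⟨u, hvu, hu, hu_out⟩ := hbase v hvi
      refine ⟨u, hvu, hu, fun huS => ?_⟩
      obtain ⟨j, hj1, hjs, huj⟩ := by simpa [S] using huS
      exact absurd huj (hu_out j hj1 hjs)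
    · obtain ⟨u, hu, hvu⟩ := hlayer i hi2 his v hvi
      refine ⟨u, hvu, huncol _ (by omega) u hu, fun _ => ?_⟩
      rw [Nat.findGreatest_eq_of_mem_of_disjoint hdisj (by omega) hu,
        Nat.findGreatest_eq_of_mem_of_disjoint hdisj his hvi]
      omega
  obtain ⟨c, hc, hout, hcol⟩ :=
    (IsPartialColoring.mk hc₀col hc₀proper).exists_extend_of_rank hmax S _ hrank
  refine ⟨c, hc.lt, hc.proper, fun v hv => hout v (by simpa [S] using hv), ?_⟩
  intro i hi1 his v hv
  obtain ⟨a, ha⟩ :=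
    Option.ne_none_iff_exists'.mp (hcol v (by simpa [S] using ⟨i, hi1, his, hv⟩))
  exact ⟨a, ha, hc.lt v a ha⟩
end

section
/- Let G be a graph, v a vertex that is uncolored while all other vertices are properly Δ-colored, and suppose some vertex u at distance d from v has degree strictly less than Δ. Then there is a proper Δ-coloring of all of G that differs from the given coloring only on the vertices of a shortest path from v to u. -/
open SimpleGraph

open Classical in
lemma exists_free_color {V : Type*} (N : Finset V) (c : V → Option ℕ) (Δ : ℕ)
    (h : N.card < Δ) : ∃ a, a < Δ ∧ ∀ x ∈ N, c x ≠ some a := by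
  by_contra hno
  push_neg at hno
  have hsub : Finset.range Δ ⊆ N.image (fun x => (c x).getD Δ) := by
    intro a ha
    rw [Finset.mem_range] at ha
    obtain ⟨x, hx, hcx⟩ := hno a ha
    exact Finset.mem_image.mpr ⟨x, hx, by rw [hcx]; rfl⟩
  have := Finset.card_le_card hsub
  rw [Finset.card_range] at this
  exact absurd (le_trans this Finset.card_image_le) (not_le.mpr h)

open Classical in
lemma token_pass {V : Type*} [Fintype V] (G : SimpleGraph V) (Δ : ℕ)
    (hmax : ∀ w, (G.neighborSet w).ncard ≤ Δ) (u : V)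
    (hu : (G.neighborSet u).ncard < Δ) :
    ∀ (n : ℕ) (v : V) (c : V → Option ℕ), G.dist v u = n → c v = none →
      (∀ w, w ≠ v → ∃ a, c w = some a ∧ a < Δ) →
      (∀ a b, G.Adj a b → c a = c b → c a = none) →
      G.Reachable v u →
      ∃ (p : G.Walk v u) (c' : V → ℕ),
        p.IsPath ∧ p.length = G.dist v u ∧
        (∀ w, c' w < Δ) ∧ (∀ a b, G.Adj a b → c' a ≠ c' b) ∧
        ∀ w, w ∉ p.support → c w = some (c' w) := by
  intro n
  induction n with
  | zero =>
    intro v c hdist hv hcol hproper hreach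
    have hvu : v = u := hreach.dist_eq_zero_iff.mp hdist
    subst hvu
    -- pick a free color for v
    have hNfin : (G.neighborSet v).Finite := Set.toFinite _
    have hcard : hNfin.toFinset.card < Δ := by
      rwa [Set.ncard_eq_toFinset_card _ hNfin] at hu
    obtain ⟨a, haΔ, hafree⟩ := exists_free_color hNfin.toFinset c Δ hcard
    refine ⟨Walk.nil, fun x => if x = v then a else (c x).getD 0, Walk.IsPath.nil, by simp [hdist], ?_, ?_, ?_⟩
    · intro w
      by_cases hw : w = v
      · simp [hw, haΔ]
      · obtain ⟨b, hb, hbΔ⟩ := hcol w hw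
        simp [hw, hb, hbΔ]
    · intro x y hadj heq
      have hxy : x ≠ y := G.ne_of_adj hadj
      by_cases hx : x = v
      · subst hx
        have hy : y ≠ x := fun h => hxy h.symm
        obtain ⟨b, hb, _⟩ := hcol y hy
        have hyN : y ∈ hNfin.toFinset := by
          simp [Set.Finite.mem_toFinset, SimpleGraph.mem_neighborSet]
          exact hadj
        have := hafree y hyN
        simp [hy, hb] at heq
        exact this (by rw [hb, heq])
      · by_cases hy : y = v
        · subst hy
          obtain ⟨b, hb, _⟩ := hcol x hx
          have hxN : x ∈ hNfin.toFinset := by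
            simp [Set.Finite.mem_toFinset, SimpleGraph.mem_neighborSet]
            exact hadj.symm
          have := hafree x hxN
          simp [hx, hb] at heq
          exact this (by rw [hb, heq])
        · obtain ⟨b, hb, _⟩ := hcol x hx
          obtain ⟨b', hb', _⟩ := hcol y hy
          simp [hx, hy, hb, hb'] at heq
          subst heq
          have := hproper x y hadj (by rw [hb, hb'])
          rw [hb] at this
          exact absurd this (by simp)
    · intro w hw
      simp [Walk.support_nil] at hw
      obtain ⟨b, hb, _⟩ := hcol w hw
      simp [hw, hb]
  | succ n ih =>
    intro v c hdist hv hcol hproper hreach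
    obtain ⟨p, hp, hplen⟩ := hreach.exists_path_of_dist
    rw [hdist] at hplen
    cases p with
    | nil => simp at hplen
    | cons hadj q =>
      rename_i w
      have hwv : w ≠ v := fun h => G.irrefl (h ▸ hadj)
      have hqlen : q.length = n := by simpa using hplen
      -- dist w u = n
      have hdwu_le : G.dist w u ≤ n := hqlen ▸ SimpleGraph.dist_le q
      have hdwu : G.dist w u = n := by
        refine le_antisymm hdwu_le ?_
        by_contra hlt
        push_neg at hlt
        obtain ⟨q', _, hq'len⟩ := (q.reachable).exists_path_of_dist
        have : G.dist v u ≤ (Walk.cons hadj q').length := SimpleGraph.dist_le _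
        simp [hq'len] at this
        omega
      -- free color for v avoiding colored neighbors other than w
      have hNfin : (G.neighborSet v).Finite := Set.toFinite _
      have hΔpos : 0 < Δ := lt_of_le_of_lt (Nat.zero_le _) hu
      have hwN : w ∈ hNfin.toFinset := by
        simp [Set.Finite.mem_toFinset, SimpleGraph.mem_neighborSet]
        exact hadj
      have hcard : (hNfin.toFinset.erase w).card < Δ := by
        have h1 : (hNfin.toFinset.erase w).card = hNfin.toFinset.card - 1 :=
          Finset.card_erase_of_mem hwN
        have h2 : hNfin.toFinset.card ≤ Δ := by
          rw [← Set.ncard_eq_toFinset_card _ hNfin]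
          exact hmax v
        omega
      obtain ⟨a, haΔ, hafree⟩ := exists_free_color (hNfin.toFinset.erase w) c Δ hcard
      set c₁ : V → Option ℕ := fun x => if x = w then none else if x = v then some a else c x with hc₁
      have hc₁w : c₁ w = none := by simp [hc₁]
      have hc₁col : ∀ x, x ≠ w → ∃ b, c₁ x = some b ∧ b < Δ := by
        intro x hx
        by_cases hxv : x = v
        · exact ⟨a, by simp [hc₁, hxv, Ne.symm hwv], haΔ⟩
        · obtain ⟨b, hb, hbΔ⟩ := hcol x hxv
          exact ⟨b, by simp [hc₁, hx, hxv, hb], hbΔ⟩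
      have hc₁proper : ∀ x y, G.Adj x y → c₁ x = c₁ y → c₁ x = none := by
        intro x y haxy heq
        by_cases hxw : x = w
        · simp [hc₁, hxw]
        by_cases hyw : y = w
        · rw [heq]; simp [hc₁, hyw]
        have hxy : x ≠ y := G.ne_of_adj haxy
        by_cases hxv : x = v
        · subst hxv
          have hyv : y ≠ x := fun h => hxy h.symm
          obtain ⟨b, hb, _⟩ := hcol y hyv
          have hyN : y ∈ hNfin.toFinset.erase w := by
            refine Finset.mem_erase.mpr ⟨hyw, ?_⟩
            simp [Set.Finite.mem_toFinset, SimpleGraph.mem_neighborSet]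
            exact haxy
          have hfr := hafree y hyN
          simp [hc₁, hxw, hyw, hyv, hb] at heq
          exact absurd (by rw [hb, heq]) hfr
        by_cases hyv : y = v
        · subst hyv
          obtain ⟨b, hb, _⟩ := hcol x hxv
          have hxN : x ∈ hNfin.toFinset.erase w := by
            refine Finset.mem_erase.mpr ⟨hxw, ?_⟩
            simp [Set.Finite.mem_toFinset, SimpleGraph.mem_neighborSet]
            exact haxy.symm
          have hfr := hafree x hxN
          simp [hc₁, hxw, hyw, hxv, hb] at heq
          exact absurd (by rw [hb, heq]) hfr
        · obtain ⟨b, hb, _⟩ := hcol x hxv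
          have heq' : c x = c y := by simpa [hc₁, hxw, hyw, hxv, hyv] using heq
          have := hproper x y haxy heq'
          rw [hb] at this
          exact absurd this (by simp)
      obtain ⟨q', c'', hq'path, hq'len, hc''Δ, hc''proper, hc''off⟩ :=
        ih w c₁ hdwu hc₁w hc₁col hc₁proper q.reachable
      have hvq' : v ∉ q'.support := by
        intro hmem
        have h1 : G.dist v u ≤ (q'.dropUntil v hmem).length := SimpleGraph.dist_le _
        have h2 := Walk.length_dropUntil_le q' hmem
        omega
      refine ⟨Walk.cons hadj q', c'', hq'path.cons hvq', by simp [hq'len, hdwu, hdist], hc''Δ,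
        hc''proper, ?_⟩
      intro x hx
      rw [Walk.support_cons, List.mem_cons] at hx
      push_neg at hx
      obtain ⟨hxv, hxq⟩ := hx
      have hxw : x ≠ w := fun h => hxq (h ▸ q'.start_mem_support)
      have := hc''off x hxq
      simpa [hc₁, hxw, hxv] using this

/-- Token passing to a low-degree vertex: if all of G is properly Δ-colored
except v, and u has degree < Δ, then G can be fully Δ-colored changing colors
only on a shortest path from v to u. -/
theorem stmt15 {V : Type*} [Fintype V] (G : SimpleGraph V) (Δ : ℕ)
    (hmax : ∀ w, (G.neighborSet w).ncard ≤ Δ) (v u : V) (c : V → Option ℕ)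
    (hv : c v = none)
    (hcol : ∀ w, w ≠ v → ∃ a, c w = some a ∧ a < Δ)
    (hproper : ∀ a b, G.Adj a b → c a = c b → c a = none)
    (hreach : G.Reachable v u)
    (hu : (G.neighborSet u).ncard < Δ) :
    ∃ (p : G.Walk v u) (c' : V → ℕ),
      p.IsPath ∧ p.length = G.dist v u ∧
      (∀ w, c' w < Δ) ∧ (∀ a b, G.Adj a b → c' a ≠ c' b) ∧
      ∀ w, w ∉ p.support → c w = some (c' w) := by
  exact token_pass G Δ hmax u hu (G.dist v u) v c rfl hv hcol hproper hreach
end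

section
/- Let G be a connected graph with maximum degree Δ ≥ 3 that is neither a path, a cycle, nor a complete graph (a 'nice' graph). Then G is Δ-colorable. -/
open SimpleGraph

set_option linter.unusedSectionVars false

namespace Brooks

variable {V : Type*} (G : SimpleGraph V)

/-- Reachability within a set of vertices. -/
def Rchb (A : Set V) (a b : V) : Prop := ∃ p : G.Walk a b, ∀ z ∈ p.support, z ∈ A

variable {G}

lemma Rchb.mem_left {A a b} (h : Rchb G A a b) : a ∈ A := by
  obtain ⟨p, hp⟩ := h; exact hp a p.start_mem_support

lemma Rchb.mem_right {A a b} (h : Rchb G A a b) : b ∈ A := by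
  obtain ⟨p, hp⟩ := h; exact hp b p.end_mem_support

lemma rchb_refl {A : Set V} {a} (ha : a ∈ A) : Rchb G A a a :=
  ⟨Walk.nil, by simp [ha]⟩

lemma Rchb.symm {A : Set V} {a b} (h : Rchb G A a b) : Rchb G A b a := by
  obtain ⟨p, hp⟩ := h
  exact ⟨p.reverse, by simpa using hp⟩

lemma Rchb.trans {A : Set V} {a b c} (h : Rchb G A a b) (h' : Rchb G A b c) :
    Rchb G A a c := by
  obtain ⟨p, hp⟩ := h; obtain ⟨q, hq⟩ := h'
  refine ⟨p.append q, fun z hz => ?_⟩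
  rcases (Walk.mem_support_append_iff _ _).1 hz with h | h
  · exact hp z h
  · exact hq z h

lemma Rchb.mono {A B : Set V} (hAB : A ⊆ B) {a b} (h : Rchb G A a b) :
    Rchb G B a b := by
  obtain ⟨p, hp⟩ := h; exact ⟨p, fun z hz => hAB (hp z hz)⟩

lemma rchb_adj {A : Set V} {a b} (h : G.Adj a b) (ha : a ∈ A) (hb : b ∈ A) :
    Rchb G A a b :=
  ⟨h.toWalk, by simp [Walk.support_cons, ha, hb]⟩

lemma Rchb.cons {A : Set V} {a b c} (h : G.Adj a b) (ha : a ∈ A)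
    (h' : Rchb G A b c) : Rchb G A a c :=
  (rchb_adj h ha h'.mem_left).trans h'

/-- The workhorse transfer lemma. -/
lemma reachable_induce_iff {S : Set V} {a b : V} (ha : a ∈ S) (hb : b ∈ S) :
    (G.induce S).Reachable ⟨a, ha⟩ ⟨b, hb⟩ ↔ Rchb G S a b := by
  constructor
  · rintro ⟨p⟩
    refine ⟨p.map ⟨Subtype.val, fun h => h⟩, fun z hz => ?_⟩
    rw [Walk.support_map] at hz
    obtain ⟨t, _, rfl⟩ := List.mem_map.1 hz
    exact t.2
  · rintro ⟨p, hp⟩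
    induction p with
    | nil => exact Reachable.refl _
    | @cons u v w h p ih =>
      have hv : v ∈ S := hp v (by simp [Walk.support_cons])
      have hw : w ∈ S := hp w (by simp [Walk.support_cons, p.end_mem_support])
      have step : (G.induce S).Adj ⟨u, ha⟩ ⟨v, hv⟩ := h
      exact step.reachable.trans (ih hv hw (fun z hz => hp z (by simp [Walk.support_cons]; tauto)))

lemma connected_induce_iff {S : Set V} :
    (G.induce S).Connected ↔ S.Nonempty ∧ ∀ a ∈ S, ∀ b ∈ S, Rchb G S a b := by
  constructor
  · intro hc
    obtain ⟨⟨a, ha⟩⟩ := hc.nonempty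
    have hp := hc.preconnected
    refine ⟨⟨a, ha⟩, fun u hu w hw => ?_⟩
    exact (reachable_induce_iff hu hw).1 (hp ⟨u, hu⟩ ⟨w, hw⟩)
  · rintro ⟨⟨a, ha⟩, h⟩
    have : Nonempty ↥S := ⟨⟨a, ha⟩⟩
    refine ⟨fun u w => ?_⟩
    obtain ⟨u, hu⟩ := u; obtain ⟨w, hw⟩ := w
    exact (reachable_induce_iff hu hw).2 (h u hu w hw)



variable {V : Type*} {G : SimpleGraph V}


/-- From any z ∈ A \ C one can reach v within A \ C, given a walk z→v inside A,
    provided all edges leaving C (within A) go to v. -/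
lemma lc_aux {A C : Set V} {v z : V} (p : G.Walk z v) :
    v ∉ C → (∀ c ∈ C, ∀ t ∈ A, t ∉ C → G.Adj c t → t = v) →
    (∀ t ∈ p.support, t ∈ A) → z ∉ C → Rchb G (A \ C) z v := by
  induction p with
  | nil =>
    intro _ _ hsup hz
    refine ⟨Walk.nil, fun t ht => ?_⟩
    rw [Walk.support_nil, List.mem_singleton] at ht
    subst ht
    exact ⟨hsup t (by simp), hz⟩
  | @cons u m w h p ih =>
    intro hvC hb hsup hz
    have hu : u ∈ A := hsup u (by simp)
    have hm : m ∈ A := hsup m (by simp [Walk.support_cons])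
    by_cases hmC : m ∈ C
    · have : u = w := hb m hmC u hu hz h.symm
      subst this
      exact ⟨Walk.nil, by simp [hu, hz]⟩
    · obtain ⟨q, hq⟩ := ih hvC hb (fun t ht => hsup t (by simp [Walk.support_cons]; tauto)) hmC
      refine ⟨Walk.cons h q, fun t ht => ?_⟩
      rw [Walk.support_cons, List.mem_cons] at ht
      rcases ht with ht' | ht'
      · subst ht'; exact ⟨hu, hz⟩
      · exact hq t ht'

/-- Escape lemma: a walk from inside C to a vertex outside C must pass through the boundary set T. -/
lemma escape_aux {C T : Set V} {z y : V} (p : G.Walk z y) :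
    (∀ c ∈ C, ∀ t, t ∉ C → G.Adj c t → t ∈ T) →
    (∀ t ∈ p.support, t ∉ T) → z ∈ C → y ∈ C := by
  induction p with
  | nil => intro _ _ hz; exact hz
  | @cons u m w h p ih =>
    intro hb hsup hz
    by_cases hmC : m ∈ C
    · exact ih hb (fun t ht => hsup t (by simp [Walk.support_cons]; tauto)) hmC
    · exact absurd (hb u hz m hmC h) (hsup m (by simp [Walk.support_cons]))

/-- First-exit lemma: a walk starting in C avoiding T either stays with endpoint in C,
    or reaches v, in which case the start can reach v within C ∪ {v}. -/
lemma first_exit_aux {C T : Set V} {v : V} {z y : V} (p : G.Walk z y) :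
    (∀ c ∈ C, ∀ t, t ∉ C → G.Adj c t → t = v ∨ t ∈ T) →
    (∀ t ∈ p.support, t ∉ T) → z ∈ C → y ∈ C ∨ Rchb G (C ∪ {v}) z v := by
  induction p with
  | nil => intro _ _ hz; exact Or.inl hz
  | @cons u m w h p ih =>
    intro hb hsup hz
    by_cases hmC : m ∈ C
    · rcases ih hb (fun t ht => hsup t (by simp [Walk.support_cons]; tauto)) hmC with h' | h'
      · exact Or.inl h'
      · refine Or.inr ?_
        obtain ⟨q, hq⟩ := h'
        refine ⟨Walk.cons h q, fun t ht => ?_⟩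
        rw [Walk.support_cons, List.mem_cons] at ht
        rcases ht with ht' | ht'
        · subst ht'; exact Or.inl hz
        · exact hq t ht'
    · rcases hb u hz m hmC h with rfl | hT
      · refine Or.inr ⟨h.toWalk, fun t ht => ?_⟩
        simp only [Walk.support_cons, Walk.support_nil, List.mem_cons, List.mem_singleton] at ht
        rcases ht with rfl | (rfl | h')
        · exact Or.inl hz
        · exact Or.inr rfl
        · simp at h'
      · exact absurd hT (hsup m (by simp [Walk.support_cons]))

/-- A walk from z to y with z ≠ y contains a penultimate-style vertex adjacent to y. -/
lemma exists_adj_end {z y : V} (p : G.Walk z y) (hne : z ≠ y) :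
    ∃ t, G.Adj t y ∧ t ∈ p.support := by
  induction p with
  | nil => exact absurd rfl hne
  | @cons u m w h p ih =>
    by_cases hmw : m = w
    · subst hmw; exact ⟨u, h, by simp⟩
    · obtain ⟨t, ht, hts⟩ := ih hmw
      exact ⟨t, ht, by simp [Walk.support_cons]; tauto⟩

/-- If there exist two nonadjacent distinct vertices in a connected graph, there is a
    path pattern x–u, x–v with u,v distinct nonadjacent. -/
lemma pattern_aux {z y : V} (p : G.Walk z y) :
    ¬ G.Adj z y → z ≠ y →
    ∃ x u v, G.Adj x u ∧ G.Adj x v ∧ u ≠ v ∧ ¬ G.Adj u v := by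
  induction p with
  | nil => intro _ hne; exact absurd rfl hne
  | @cons u m w h p ih =>
    intro hna hne
    by_cases hmw : m = w
    · subst hmw; exact absurd h hna
    · by_cases hA : G.Adj m w
      · exact ⟨m, u, w, h.symm, hA, hne, hna⟩
      · exact ih hA hmw



variable {W : Type*} [Fintype W]

noncomputable def greedy (H : SimpleGraph W) (f : W → ℕ) (L : W → Finset ℕ) (w : W) : ℕ :=
  have : DecidableRel H.Adj := Classical.decRel _
  ((L w) \ (((H.neighborFinset w).filter (fun u => f u < f w)).attach.image
      (fun u => greedy H f L u.1))).min.getD 0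
termination_by f w
decreasing_by
  have := u.2
  simp only [Finset.mem_filter] at this
  exact this.2

lemma greedy_spec (H : SimpleGraph W) (f : W → ℕ) (L : W → Finset ℕ)
    (hcard : ∀ w, letI : DecidableRel H.Adj := Classical.decRel _
      ((H.neighborFinset w).filter (fun u => f u < f w)).card < (L w).card)
    (w : W) :
    letI : DecidableRel H.Adj := Classical.decRel _
    greedy H f L w ∈ (L w) \ (((H.neighborFinset w).filter (fun u => f u < f w)).attach.image
      (fun u => greedy H f L u.1)) := by
  letI : DecidableRel H.Adj := Classical.decRel _
  set E := ((H.neighborFinset w).filter (fun u => f u < f w)) with hE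
  set s := (L w) \ (E.attach.image (fun u => greedy H f L u.1)) with hs
  have hne : s.Nonempty := by
    apply Finset.card_pos.1
    have h1 : (E.attach.image (fun u => greedy H f L u.1)).card ≤ E.card := by
      simpa using Finset.card_image_le (s := E.attach)
    have h2 : (L w).card ≤ s.card + (E.attach.image (fun u => greedy H f L u.1)).card := by
      calc (L w).card ≤ (L w ∪ E.attach.image (fun u => greedy H f L u.1)).card :=
            Finset.card_le_card Finset.subset_union_left
        _ = s.card + (E.attach.image (fun u => greedy H f L u.1)).card :=
            (Finset.card_sdiff_add_card _ _).symm
    have h3 := hcard w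
    rw [← hE] at h3
    omega
  have : greedy H f L w = s.min' hne := by
    rw [greedy]
    rw [← Finset.coe_min' hne]
    rfl
  rw [this]
  exact s.min'_mem hne

/-- The main greedy list-coloring lemma. -/
lemma greedy_coloring (H : SimpleGraph W) [DecidableRel H.Adj] (f : W → ℕ)
    (hf : Function.Injective f) (L : W → Finset ℕ)
    (hcard : ∀ w, ((H.neighborFinset w).filter (fun u => f u < f w)).card < (L w).card) :
    ∃ c : W → ℕ, (∀ w, c w ∈ L w) ∧ ∀ u w, H.Adj u w → c u ≠ c w := by
  have hcard' : ∀ w, letI : DecidableRel H.Adj := Classical.decRel _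
      ((H.neighborFinset w).filter (fun u => f u < f w)).card < (L w).card := by
    intro w
    have e : (@neighborFinset W H w (@neighborSetFintype W H _ (Classical.decRel _) w))
        = H.neighborFinset w := by
      ext t; simp [mem_neighborFinset]
    rw [e]
    exact hcard w
  refine ⟨greedy H f L, fun w => ?_, fun u w hadj => ?_⟩
  · have := greedy_spec H f L hcard' w
    exact (Finset.mem_sdiff.1 this).1
  · -- WLOG f u < f w
    have hne : f u ≠ f w := fun h => H.ne_of_adj hadj (hf h)
    have key : ∀ a b, H.Adj a b → f a < f b → greedy H f L a ≠ greedy H f L b := by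
      intro a b hab hlt heq
      have hsb := greedy_spec H f L hcard' b
      letI : DecidableRel H.Adj := Classical.decRel _
      rw [Finset.mem_sdiff] at hsb
      apply hsb.2
      rw [Finset.mem_image]
      refine ⟨⟨a, ?_⟩, Finset.mem_attach _ _, heq⟩
      rw [Finset.mem_filter, mem_neighborFinset]
      exact ⟨hab.symm, hlt⟩
    rcases lt_or_gt_of_ne hne with h | h
    · exact key u w hadj h
    · exact fun he => key w u hadj.symm h he.symm



variable {W : Type*} [Fintype W]

/-- In a connected finite graph, there is an injective rank so that every
vertex except x has a strictly-later neighbor. -/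
lemma exists_rank (H : SimpleGraph W) (hc : H.Connected) (x : W) :
    ∃ f : W → ℕ, Function.Injective f ∧ ∀ w, w ≠ x → ∃ z, H.Adj w z ∧ f w < f z := by
  classical
  set n := Fintype.card W with hn
  have hn0 : 0 < n := Fintype.card_pos_iff.2 ⟨x⟩
  set ι : W → ℕ := fun w => (Fintype.equivFin W w).val with hι
  have hιlt : ∀ w, ι w < n := fun w => (Fintype.equivFin W w).isLt
  have hιinj : Function.Injective ι := fun a b h =>
    (Fintype.equivFin W).injective (Fin.ext h)
  set D := Finset.univ.sup (fun w => H.dist x w) with hD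
  have hDle : ∀ w, H.dist x w ≤ D := fun w => Finset.le_sup (Finset.mem_univ w)
  refine ⟨fun w => n * (D - H.dist x w) + ι w, ?_, ?_⟩
  · intro a b h
    have ha := hιlt a; have hb := hιlt b
    have : ι a = ι b := by
      have h1 := congrArg (· % n) h
      simpa [Nat.mul_add_mod, Nat.mod_eq_of_lt ha, Nat.mod_eq_of_lt hb] using h1
    exact hιinj this
  · intro w hw
    obtain ⟨p, hp⟩ := hc.exists_walk_length_eq_dist x w
    have hdpos : 0 < H.dist x w := hc.pos_dist_of_ne (Ne.symm hw)
    -- find neighbor z of w with dist x z < dist x w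
    obtain ⟨z, hzadj, hzd⟩ : ∃ z, H.Adj w z ∧ H.dist x z < H.dist x w := by
      cases hq : p.reverse with
      | nil =>
        exfalso
        have hl : p.length = 0 := by
          have := congrArg Walk.length hq
          simpa [Walk.length_reverse] using this
        rw [hp] at hl
        omega
      | @cons _ m _ h q =>
        refine ⟨m, h, ?_⟩
        have hlen : q.reverse.length = q.length := Walk.length_reverse _
        have : H.dist x m ≤ q.length := by
          have := H.dist_le q.reverse
          omega
        have hlq : q.length + 1 = H.dist x w := by
          have := congrArg Walk.length hq
          simp [Walk.length_reverse, hp, Walk.length_cons] at this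
          omega
        omega
    refine ⟨z, hzadj, ?_⟩
    have h1 : H.dist x w ≤ D := hDle w
    have h2 : D - H.dist x z ≥ D - H.dist x w + 1 := by omega
    have h3 : n * (D - H.dist x z) ≥ n * (D - H.dist x w) + n := by
      calc n * (D - H.dist x z) ≥ n * (D - H.dist x w + 1) := Nat.mul_le_mul_left n h2
        _ = n * (D - H.dist x w) + n := by ring
    have h4 := hιlt w
    show n * (D - H.dist x w) + ι w < n * (D - H.dist x z) + ι z
    omega

/-- filter card bound when there's a later neighbor -/
lemma filter_card_le (H : SimpleGraph W) [DecidableRel H.Adj] (f : W → ℕ) (w : W)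
    {z : W} (hz : H.Adj w z) (hlt : f w < f z) :
    ((H.neighborFinset w).filter (fun u => f u < f w)).card + 1 ≤ H.degree w := by
  classical
  have hsub : (H.neighborFinset w).filter (fun u => f u < f w) ⊆
      (H.neighborFinset w).erase z := by
    intro t ht
    rw [Finset.mem_filter] at ht
    rw [Finset.mem_erase]
    refine ⟨fun h => ?_, ht.1⟩
    subst h; omega
  have h1 := Finset.card_le_card hsub
  have h2 : ((H.neighborFinset w).erase z).card = H.degree w - 1 := by
    rw [Finset.card_erase_of_mem (by rwa [mem_neighborFinset]), card_neighborFinset_eq_degree]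
  have h3 : 1 ≤ H.degree w := by
    rw [← card_neighborFinset_eq_degree]
    exact Finset.card_pos.2 ⟨z, by rwa [mem_neighborFinset]⟩
  omega

lemma filter_card_le' (H : SimpleGraph W) [DecidableRel H.Adj] (f : W → ℕ) (w : W) :
    ((H.neighborFinset w).filter (fun u => f u < f w)).card ≤ H.degree w := by
  rw [← card_neighborFinset_eq_degree]
  exact Finset.card_le_card (Finset.filter_subset _ _)







lemma caseA (H : SimpleGraph W) [DecidableRel H.Adj] (hc : H.Connected) (Δ : ℕ)
    (hdeg : ∀ w, H.degree w ≤ Δ) (x : W) (hx : H.degree x < Δ) :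
    ∃ c : W → ℕ, (∀ w, c w < Δ) ∧ ∀ u w, H.Adj u w → c u ≠ c w := by
  obtain ⟨f, hfinj, hf⟩ := exists_rank H hc x
  have hcards : ∀ w, ((H.neighborFinset w).filter (fun u => f u < f w)).card <
      ((fun _ : W => Finset.range Δ) w).card := by
    intro w
    rw [Finset.card_range]
    by_cases hw : w = x
    · subst hw
      exact lt_of_le_of_lt (filter_card_le' H f w) hx
    · obtain ⟨z, hz, hlt⟩ := hf w hw
      have := filter_card_le H f w hz hlt
      have := hdeg w
      omega
  obtain ⟨c, hc1, hc2⟩ := greedy_coloring H f hfinj (fun _ => Finset.range Δ) hcards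
  exact ⟨c, fun w => by simpa using hc1 w, hc2⟩



section Part6
variable {V : Type*} [Fintype V] {G : SimpleGraph V}

/-- Induced degree + number of outside neighbors is at most the degree. -/
lemma induce_degree_add_le [DecidableRel G.Adj] (S : Set V) [Fintype ↥S]
    [DecidableRel (G.induce S).Adj]
    (w : ↥S) (T : Finset V) (hT : ∀ t ∈ T, G.Adj w.1 t ∧ t ∉ S) :
    (G.induce S).degree w + T.card ≤ G.degree w.1 := by
  classical
  set I := ((G.induce S).neighborFinset w).image (Subtype.val) with hI
  have hIcard : I.card = (G.induce S).degree w := by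
    rw [hI, Finset.card_image_of_injective _ Subtype.val_injective,
      card_neighborFinset_eq_degree]
  have hTsub : T ⊆ G.neighborFinset w.1 := fun t ht => by
    rw [mem_neighborFinset]; exact (hT t ht).1
  have hIsub : I ⊆ (G.neighborFinset w.1) \ T := by
    intro t ht
    rw [hI, Finset.mem_image] at ht
    obtain ⟨u, hu, rfl⟩ := ht
    rw [mem_neighborFinset] at hu
    rw [Finset.mem_sdiff, mem_neighborFinset]
    exact ⟨hu, fun hmem => (hT _ hmem).2 u.2⟩
  have := Finset.card_le_card hIsub
  rw [Finset.card_sdiff_of_subset hTsub] at this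
  have hTle := Finset.card_le_card hTsub
  rw [card_neighborFinset_eq_degree] at this hTle
  omega

/-- Connectivity-within-a-set, propositional form. -/
def Conn (G : SimpleGraph V) (A : Set V) : Prop :=
  A.Nonempty ∧ ∀ a ∈ A, ∀ b ∈ A, Rchb G A a b

lemma conn_iff_connected {A : Set V} : Conn G A ↔ (G.induce A).Connected :=
  (connected_induce_iff).symm

lemma not_conn_elim {A : Set V} (hne : A.Nonempty) (h : ¬ Conn G A) :
    ∃ z₁ ∈ A, ∃ z₂ ∈ A, ¬ Rchb G A z₁ z₂ := by
  rw [Conn] at h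
  push_neg at h
  exact h hne

/-- The reachability closure of z within A. -/
def clos (G : SimpleGraph V) (A : Set V) (z : V) : Set V := {w | w ∈ A ∧ Rchb G A z w}

variable {A : Set V} {z : V}

lemma clos_subset : clos G A z ⊆ A := fun _ h => h.1

lemma mem_clos_self (hz : z ∈ A) : z ∈ clos G A z := ⟨hz, rchb_refl hz⟩

lemma clos_rchb {w : V} (hw : w ∈ clos G A z) : Rchb G (clos G A z) z w := by
  obtain ⟨hwA, p, hp⟩ := hw
  refine ⟨p, fun t ht => ⟨hp t ht, ?_⟩⟩
  classical
  exact ⟨p.takeUntil t ht, fun s hs => hp s (Walk.support_takeUntil_subset _ _ hs)⟩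

lemma clos_conn (hz : z ∈ A) : Conn G (clos G A z) := by
  refine ⟨⟨z, mem_clos_self hz⟩, fun a ha b hb => ?_⟩
  exact (clos_rchb ha).symm.trans (clos_rchb hb)

lemma clos_closed {c t : V} (hc : c ∈ clos G A z) (ht : t ∈ A) (htc : t ∉ clos G A z) :
    ¬ G.Adj c t := fun hadj =>
  htc ⟨ht, hc.2.trans (rchb_adj hadj hc.1 ht)⟩

lemma mem_clos_iff_rchb {w : V} (hz : z ∈ A) : w ∈ clos G A z ↔ Rchb G A z w :=
  ⟨fun h => h.2, fun h => ⟨h.mem_right, h⟩⟩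

lemma clos_eq_of_mem {w : V} (hz : z ∈ A) (hw : w ∈ clos G A z) :
    clos G A w = clos G A z := by
  ext t
  constructor
  · rintro ⟨htA, h⟩; exact ⟨htA, hw.2.trans h⟩
  · rintro ⟨htA, h⟩; exact ⟨htA, hw.2.symm.trans h⟩

end Part6

section Part7
variable {V : Type*} [Fintype V] {G : SimpleGraph V}

lemma swap_lt {Δ a n : ℕ} (ha : a < Δ) (hΔ : 0 < Δ) (hn : n < Δ) :
    (Equiv.swap a 0) n < Δ := by
  rcases eq_or_ne n a with rfl | h1
  · rwa [Equiv.swap_apply_left]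
  · rcases eq_or_ne n 0 with rfl | h2
    · rwa [Equiv.swap_apply_right]
    · rwa [Equiv.swap_apply_of_ne_of_ne h1 h2]

/-- Gluing colorings at a cut vertex. -/
lemma glue [DecidableRel G.Adj] (Δ : ℕ) (hΔ : 3 ≤ Δ) (hconn : G.Connected)
    (hreg : ∀ w, G.degree w = Δ) (x : V)
    (hdis : ¬ Conn G {w | w ≠ x}) :
    ∃ c : V → ℕ, (∀ w, c w < Δ) ∧ ∀ u w, G.Adj u w → c u ≠ c w := by
  classical
  set Hs : Set V := {w | w ≠ x} with hHs
  have hxHs : x ∉ Hs := by simp [hHs]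
  have hHsne : Hs.Nonempty := by
    have : 0 < G.degree x := by rw [hreg x]; omega
    rw [← card_neighborFinset_eq_degree] at this
    obtain ⟨t, ht⟩ := Finset.card_pos.1 this
    rw [mem_neighborFinset] at ht
    exact ⟨t, G.ne_of_adj ht.symm⟩
  -- the two witnesses of disconnection
  obtain ⟨z₁, hz₁, z₂, hz₂, hz12⟩ := not_conn_elim hHsne hdis
  -- piece reach: from any t in clos of z, reach x within piece
  have piece_reach : ∀ z, z ∈ Hs → ∀ t ∈ clos G Hs z, Rchb G (clos G Hs z ∪ {x}) t x := by
    intro z hz t ht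
    obtain ⟨p⟩ := hconn t x
    have hb : ∀ c ∈ clos G Hs z, ∀ s, s ∉ clos G Hs z → G.Adj c s → s = x ∨ s ∈ (∅ : Set V) := by
      intro c hc s hs hadj
      left
      by_contra hsx
      exact clos_closed hc (show s ∈ Hs from hsx) hs hadj
    rcases first_exit_aux p hb (by simp) ht with hx' | hr
    · exact absurd (clos_subset hx') hxHs
    · exact hr
  have piece_conn : ∀ z, z ∈ Hs → Conn G (clos G Hs z ∪ {x}) := by
    intro z hz
    refine ⟨⟨x, Or.inr rfl⟩, fun a ha b hb => ?_⟩
    have hax : Rchb G (clos G Hs z ∪ {x}) a x := by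
      rcases ha with ha | ha
      · exact piece_reach z hz a ha
      · cases ha; exact rchb_refl (Or.inr rfl)
    have hbx : Rchb G (clos G Hs z ∪ {x}) b x := by
      rcases hb with hb | hb
      · exact piece_reach z hz b hb
      · cases hb; exact rchb_refl (Or.inr rfl)
    exact hax.trans hbx.symm
  -- x has a neighbor outside each piece
  have piece_out : ∀ z, z ∈ Hs → ∃ t, G.Adj x t ∧ t ∉ clos G Hs z ∪ {x} := by
    intro z hz
    have hone : z₁ ∉ clos G Hs z ∨ z₂ ∉ clos G Hs z := by
      by_contra h
      push_neg at h
      exact hz12 ((clos_rchb h.1).symm.trans (clos_rchb h.2) |>.mono clos_subset)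
    have : ∃ zz, zz ∈ Hs ∧ zz ∉ clos G Hs z := by
      rcases hone with h | h
      · exact ⟨z₁, hz₁, h⟩
      · exact ⟨z₂, hz₂, h⟩
    obtain ⟨zz, hzz, hzznot⟩ := this
    have hdisj : ∀ t, t ∈ clos G Hs zz → t ∉ clos G Hs z := by
      intro t ht hmem
      exact hzznot ⟨hzz, hmem.2.trans ht.2.symm⟩
    obtain ⟨p, hp⟩ := piece_reach zz hzz zz (mem_clos_self hzz)
    obtain ⟨t, hadj, hts⟩ := exists_adj_end p hzz
    have htx : t ≠ x := G.ne_of_adj hadj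
    have ht' : t ∈ clos G Hs zz := by
      rcases hp t hts with h | h
      · exact h
      · exact absurd h htx
    exact ⟨t, hadj.symm, by
      rintro (h | h)
      · exact hdisj t ht' h
      · exact htx h⟩
  -- piece colorings as total functions
  set Pp : Set V → (V → ℕ) → Prop := fun S c =>
    (∀ w, c w < Δ) ∧ c x = 0 ∧
      (∀ a b, a ∈ S ∪ {x} → b ∈ S ∪ {x} → G.Adj a b → c a ≠ c b) with hPp
  have hex : ∀ z, z ∈ Hs → ∃ c : V → ℕ, Pp (clos G Hs z) c := by
    intro z hz
    set S : Set V := clos G Hs z ∪ {x} with hS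
    letI : DecidableRel (G.induce S).Adj := Classical.decRel _
    have hconnS : (G.induce S).Connected := conn_iff_connected.1 (piece_conn z hz)
    have hdegS : ∀ w : ↥S, (G.induce S).degree w ≤ Δ := by
      intro w
      have := induce_degree_add_le (G := G) S w ∅ (by simp)
      simpa [hreg w.1] using this
    have hxS : x ∈ S := Or.inr rfl
    have hdegx : (G.induce S).degree (⟨x, hxS⟩ : ↥S) < Δ := by
      obtain ⟨t, hadj, htS⟩ := piece_out z hz
      have := induce_degree_add_le (G := G) S ⟨x, hxS⟩ {t} (by
        intro s hs
        rw [Finset.mem_singleton] at hs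
        subst hs
        exact ⟨hadj, htS⟩)
      rw [Finset.card_singleton, hreg x] at this
      omega
    obtain ⟨c₀, hc₀lt, hc₀p⟩ := caseA (G.induce S) hconnS Δ hdegS ⟨x, hxS⟩ hdegx
    set c₁ : ↥S → ℕ := fun w => (Equiv.swap (c₀ ⟨x, hxS⟩) 0) (c₀ w) with hc₁
    refine ⟨fun w => if hw : w ∈ S then c₁ ⟨w, hw⟩ else 0, ?_, ?_, ?_⟩
    · intro w
      by_cases hw : w ∈ S
      · simp only [dif_pos hw]
        exact swap_lt (hc₀lt _) (by omega) (hc₀lt _)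
      · simp only [dif_neg hw]; omega
    · simp only [dif_pos hxS]
      rw [hc₁]
      simp
    · intro a b ha hb hadj
      simp only [dif_pos (show a ∈ S from ha), dif_pos (show b ∈ S from hb)]
      intro heq
      have : c₀ ⟨a, ha⟩ = c₀ ⟨b, hb⟩ := (Equiv.swap _ _).injective heq
      exact hc₀p ⟨a, ha⟩ ⟨b, hb⟩ hadj this
  -- congruence for choice
  have key : ∀ (S1 S2 : Set V) (h12 : S1 = S2) (h1 : ∃ c, Pp S1 c) (h2 : ∃ c, Pp S2 c),
      Classical.choose h1 = Classical.choose h2 := by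
    intro S1 S2 h12
    subst h12
    intro h1 h2
    rw [Subsingleton.elim h1 h2]
  -- global coloring
  refine ⟨fun w => if hw : w ≠ x then Classical.choose (hex w hw) w else 0, ?_, ?_⟩
  · intro w
    by_cases hw : w ≠ x
    · simp only [dif_pos hw]
      exact (Classical.choose_spec (hex w hw)).1 w
    · simp only [dif_neg hw]; omega
  · intro u w hadj heq
    by_cases hu : u ≠ x
    · by_cases hw : w ≠ x
      · -- same piece
        have hmem : w ∈ clos G Hs u := ⟨hw, rchb_adj hadj hu hw⟩
        have hclo : clos G Hs w = clos G Hs u := clos_eq_of_mem hu hmem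
        have hchoose : Classical.choose (hex w hw) = Classical.choose (hex u hu) :=
          key _ _ hclo (hex w hw) (hex u hu)
        simp only [dif_pos hu, dif_pos hw, hchoose] at heq
        exact (Classical.choose_spec (hex u hu)).2.2 u w
          (Or.inl (mem_clos_self hu)) (Or.inl hmem) hadj heq
      · push_neg at hw
        rw [hw] at heq hadj
        simp only [dif_pos hu, dif_neg (show ¬ (x ≠ x) by simp)] at heq
        have hs := Classical.choose_spec (hex u hu)
        exact hs.2.2 u x (Or.inl (mem_clos_self hu)) (Or.inr rfl) hadj (by rw [heq, hs.2.1])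
    · push_neg at hu
      rw [hu] at heq hadj
      have hw : w ≠ x := (G.ne_of_adj hadj).symm
      simp only [dif_pos hw, dif_neg (show ¬ (x ≠ x) by simp)] at heq
      have hs := Classical.choose_spec (hex w hw)
      exact hs.2.2 x w (Or.inr rfl) (Or.inl (mem_clos_self hw)) hadj (by rw [← heq, hs.2.1])

end Part7

section Part8
variable {V : Type*} [Fintype V] {G : SimpleGraph V}

/-- An "end fragment" of G - a, hanging at cut vertex v. -/
def IsEnd (G : SimpleGraph V) (a v : V) (C : Set V) : Prop :=
  v ≠ a ∧ C.Nonempty ∧ (∀ c ∈ C, c ≠ a) ∧ v ∉ C ∧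
    (∀ p ∈ C, ∀ q, q ∉ C → G.Adj p q → q = v ∨ q = a) ∧ Conn G C ∧
    ∃ q, q ≠ a ∧ q ∉ C ∧ q ≠ v

lemma isEnd_clos {a v z q : V} (hva : v ≠ a) (hz : z ≠ a ∧ z ≠ v)
    (hq : q ≠ a ∧ q ≠ v) (hqC : q ∉ clos G {w | w ≠ a ∧ w ≠ v} z) :
    IsEnd G a v (clos G {w | w ≠ a ∧ w ≠ v} z) := by
  set A : Set V := {w | w ≠ a ∧ w ≠ v} with hA
  have hzA : z ∈ A := hz
  refine ⟨hva, ⟨z, mem_clos_self hzA⟩, ?_, ?_, ?_, clos_conn hzA, q, hq.1, hqC, hq.2⟩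
  · exact fun c hc => (clos_subset hc).1
  · exact fun hv => (clos_subset hv).2 rfl
  · intro p hp t ht hadj
    by_contra hcon
    push_neg at hcon
    exact clos_closed hp (show t ∈ A from ⟨hcon.2, hcon.1⟩) ht hadj

/-- From an end fragment of minimal size (among those avoiding F), removing any of its
vertices from G - a keeps it connected. -/
lemma min_end_no_cut {a : V} (hHs : Conn G {w | w ≠ a}) (F : Set V) (v : V) (C : Set V)
    (hend : IsEnd G a v C) (hdisj : ∀ t ∈ C, t ∉ F)
    (hmin : ∀ v' C', IsEnd G a v' C' → (∀ t ∈ C', t ∉ F) → C.ncard ≤ C'.ncard) :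
    ∀ w ∈ C, Conn G ({t | t ≠ a} \ {w}) := by
  classical
  obtain ⟨hva, hCne, hCHs, hvC, hbd, hCconn, q0, hq0⟩ := hend
  set Hs : Set V := {w | w ≠ a} with hHsdef
  have hvHs : v ∈ Hs := hva
  -- (★) everything outside C reaches v avoiding C
  have star : ∀ z ∈ Hs \ C, Rchb G (Hs \ C) z v := by
    intro z hz
    obtain ⟨p, hp⟩ := hHs.2 z hz.1 v hvHs
    refine lc_aux p hvC ?_ hp hz.2
    intro c hc t ht htC hadj
    rcases hbd c hc t htC hadj with h | h
    · exact h
    · exact absurd h ht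
  intro w hwC
  by_contra hncon
  have hwHs : w ∈ Hs := hCHs w hwC
  have hne : (Hs \ {w}).Nonempty := ⟨v, hvHs, fun h => hvC (h ▸ hwC)⟩
  obtain ⟨z₁, hz₁, z₂, hz₂, h12⟩ := not_conn_elim hne hncon
  -- each clos is within Hs \ {w}; at most one meets Hs \ C
  have hsub : Hs \ C ⊆ Hs \ {w} := fun t ht => ⟨ht.1, fun h => ht.2 (h ▸ hwC)⟩
  have hmeet : ∀ z, z ∈ Hs \ {w} → ∀ t, t ∈ clos G (Hs \ {w}) z → t ∈ Hs \ C →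
      Rchb G (Hs \ {w}) z v := by
    intro z hz t ht htc
    exact (clos_rchb ht).mono clos_subset |>.trans ((star t htc).mono hsub)
  have honeside : (∀ t ∈ clos G (Hs \ {w}) z₁, t ∈ C) ∨ (∀ t ∈ clos G (Hs \ {w}) z₂, t ∈ C) := by
    by_contra hcon
    push_neg at hcon
    obtain ⟨⟨t₁, ht₁, ht₁C⟩, ⟨t₂, ht₂, ht₂C⟩⟩ := hcon
    have h1 := hmeet z₁ hz₁ t₁ ht₁ ⟨(clos_subset ht₁).1, ht₁C⟩
    have h2 := hmeet z₂ hz₂ t₂ ht₂ ⟨(clos_subset ht₂).1, ht₂C⟩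
    exact h12 (h1.trans h2.symm)
  have main : ∀ z, z ∈ Hs \ {w} → (∀ t ∈ clos G (Hs \ {w}) z, t ∈ C) → False := by
    intro z hz hsubC
    set D := clos G (Hs \ {w}) z with hD
    have hDend : IsEnd G a w D := by
      refine ⟨hwHs, ⟨z, mem_clos_self hz⟩, ?_, ?_, ?_, clos_conn hz, v, hva, ?_, ?_⟩
      · exact fun c hc => (clos_subset hc).1
      · exact fun hw => (clos_subset hw).2 rfl
      · intro p hp t ht hadj
        by_cases h1 : t = w
        · exact Or.inl h1
        by_cases h2 : t = a
        · exact Or.inr h2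
        · exact absurd hadj (clos_closed hp (show t ∈ Hs \ {w} from ⟨h2, h1⟩) ht)
      · exact fun h => hvC (hsubC v h)
      · exact fun h => hvC (h ▸ hwC)
    have hDF : ∀ t ∈ D, t ∉ F := fun t ht => hdisj t (hsubC t ht)
    have hDC : D ⊆ C \ {w} := fun t ht => ⟨hsubC t ht, (clos_subset ht).2⟩
    have hlt : D.ncard < C.ncard := by
      calc D.ncard ≤ (C \ {w}).ncard := Set.ncard_le_ncard hDC (Set.toFinite _)
        _ < C.ncard := Set.ncard_diff_singleton_lt_of_mem hwC (Set.toFinite _)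
    exact absurd (hmin w D hDend hDF) (by omega)
  rcases honeside with h | h
  · exact main z₁ hz₁ h
  · exact main z₂ hz₂ h

end Part8

section Part9
variable {V : Type*} [Fintype V] {G : SimpleGraph V}

lemma structural [DecidableRel G.Adj] (Δ : ℕ) (hΔ : 3 ≤ Δ) (hconn : G.Connected)
    (hreg : ∀ w, G.degree w = Δ) (hnc : G ≠ ⊤)
    (h2 : ∀ x : V, Conn G {w | w ≠ x}) :
    ∃ x u v, G.Adj x u ∧ G.Adj x v ∧ u ≠ v ∧ ¬ G.Adj u v ∧
      Conn G {w | w ≠ u ∧ w ≠ v} := by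
  classical
  -- a nonadjacent pair exists
  obtain ⟨a₀, b₀, hab₀, hnadj₀⟩ : ∃ a b, a ≠ b ∧ ¬ G.Adj a b := by
    by_contra h
    push_neg at h
    apply hnc
    ext u w
    simp only [top_adj]
    exact ⟨G.ne_of_adj, fun hne => h u w hne⟩
  obtain ⟨x₀, u₀, v₀, hpat⟩ : ∃ x u v, G.Adj x u ∧ G.Adj x v ∧ u ≠ v ∧ ¬ G.Adj u v := by
    obtain ⟨p⟩ := hconn a₀ b₀
    exact pattern_aux p hnadj₀ hab₀
  by_cases h3 : ∀ u v : V, u ≠ v → Conn G {w | w ≠ u ∧ w ≠ v}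
  · exact ⟨x₀, u₀, v₀, hpat.1, hpat.2.1, hpat.2.2.1, hpat.2.2.2,
      h3 u₀ v₀ hpat.2.2.1⟩
  push_neg at h3
  obtain ⟨a, b, hab, hnot⟩ := h3
  set Hs : Set V := {w | w ≠ a} with hHsdef
  have hHsConn : Conn G Hs := h2 a
  -- |V| ≥ Δ + 1, so {w | w ≠ a ∧ w ≠ b} is nonempty
  have hcard : Δ + 1 ≤ Fintype.card V := by
    have h1 : (insert a (G.neighborFinset a)).card = Δ + 1 := by
      rw [Finset.card_insert_of_notMem (by simp), card_neighborFinset_eq_degree, hreg]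
    calc Δ + 1 = (insert a (G.neighborFinset a)).card := h1.symm
      _ ≤ Finset.univ.card := Finset.card_le_univ _
      _ = Fintype.card V := rfl
  have hAne : ({w | w ≠ a ∧ w ≠ b} : Set V).Nonempty := by
    rw [Set.nonempty_iff_ne_empty]
    intro h
    have hsub : (Finset.univ : Finset V) ⊆ {a, b} := by
      intro t _
      simp only [Finset.mem_insert, Finset.mem_singleton]
      by_contra hc
      push_neg at hc
      have ht : t ∈ ({w | w ≠ a ∧ w ≠ b} : Set V) := ⟨hc.1, hc.2⟩
      rw [h] at ht
      exact ht
    have := Finset.card_le_card hsub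
    have h2' : ({a, b} : Finset V).card ≤ 2 := Finset.card_insert_le _ _ |>.trans (by simp)
    have : Fintype.card V ≤ 2 := le_trans (by simpa using Finset.card_le_card hsub) h2'
    omega
  obtain ⟨z₁, hz₁, z₂, hz₂, h12⟩ := not_conn_elim hAne hnot
  -- initial end fragment
  have hend₀ : IsEnd G a b (clos G {w | w ≠ a ∧ w ≠ b} z₁) := by
    refine isEnd_clos hab.symm hz₁ hz₂ ?_
    intro h
    exact h12 ((clos_rchb h).mono clos_subset)
  -- first minimization (F = ∅)
  have hPne : ∃ n : ℕ, ∃ v C, IsEnd G a v C ∧ C.ncard = n :=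
    ⟨_, b, _, hend₀, rfl⟩
  obtain ⟨v₁, C₁, hend₁, hcard₁⟩ := Nat.find_spec hPne
  have hmin₁ : ∀ v' C', IsEnd G a v' C' → C₁.ncard ≤ C'.ncard := by
    intro v' C' h'
    rw [hcard₁]
    exact Nat.find_min' hPne ⟨v', C', h', rfl⟩
  have hnocut₁ : ∀ w ∈ C₁, Conn G (Hs \ {w}) :=
    min_end_no_cut hHsConn ∅ v₁ C₁ hend₁ (by simp)
      (fun v' C' h' _ => hmin₁ v' C' h')
  obtain ⟨hv₁a, hC₁ne, hC₁Hs, hv₁C₁, hbd₁, hC₁conn, -⟩ := id hend₁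
  -- second family: ends disjoint from C₁ ∪ {v₁}
  have hQne : ∃ n : ℕ, ∃ v C, (IsEnd G a v C ∧ ∀ t ∈ C, t ∉ C₁ ∪ {v₁}) ∧ C.ncard = n := by
    -- complement of C₁ ∪ {v₁} in Hs is nonempty
    obtain ⟨-, -, -, -, -, -, q₀, hq₀a, hq₀C, hq₀v⟩ := id hend₁
    have hq₀A : q₀ ∈ ({w | w ≠ a ∧ w ≠ v₁} : Set V) := ⟨hq₀a, hq₀v⟩
    set D := clos G {w | w ≠ a ∧ w ≠ v₁} q₀ with hDdef
    -- D misses C₁ entirely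
    have hDC₁ : ∀ t ∈ D, t ∉ C₁ := by
      intro t ht htC₁
      obtain ⟨p, hp⟩ := (clos_rchb ht).symm
      have := escape_aux (C := C₁) (T := {v₁, a}) p
        (fun c hc s hs hadj => by
          rcases hbd₁ c hc s hs hadj with h | h
          · exact Or.inl h
          · exact Or.inr h)
        (fun s hs => by
          have hsD := hp s hs
          have := clos_subset hsD
          simp only [Set.mem_insert_iff, Set.mem_singleton_iff]
          push_neg
          exact ⟨this.2, this.1⟩) htC₁
      exact hq₀C this
    obtain ⟨c₀, hc₀⟩ := hC₁ne
    have hc₀a : c₀ ≠ a := hC₁Hs c₀ hc₀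
    have hc₀v : c₀ ≠ v₁ := fun h => hv₁C₁ (h ▸ hc₀)
    have hc₀D : c₀ ∉ D := fun h => hDC₁ c₀ h hc₀
    have hDend : IsEnd G a v₁ D := isEnd_clos hv₁a hq₀A ⟨hc₀a, hc₀v⟩ hc₀D
    refine ⟨D.ncard, v₁, D, ⟨hDend, ?_⟩, rfl⟩
    intro t ht
    simp only [Set.mem_union, Set.mem_singleton_iff]
    push_neg
    exact ⟨hDC₁ t ht, (clos_subset ht).2⟩
  obtain ⟨v₂, C₂, ⟨hend₂, hdisj₂⟩, hcard₂⟩ := Nat.find_spec hQne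
  have hmin₂ : ∀ v' C', IsEnd G a v' C' → (∀ t ∈ C', t ∉ C₁ ∪ {v₁}) → C₂.ncard ≤ C'.ncard := by
    intro v' C' h' hd'
    rw [hcard₂]
    exact Nat.find_min' hQne ⟨v', C', ⟨h', hd'⟩, rfl⟩
  obtain ⟨hv₂a, hC₂ne, hC₂Hs, hv₂C₂, hbd₂, hC₂conn, -⟩ := id hend₂
  have hC₁C₂ : ∀ t ∈ C₂, t ∉ C₁ := fun t ht h =>
    (hdisj₂ t ht) (Or.inl h)
  have hv₁C₂ : v₁ ∉ C₂ := fun h => (hdisj₂ v₁ h) (Or.inr rfl)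
  have hnocut₂ : ∀ w ∈ C₂, Conn G (Hs \ {w}) :=
    min_end_no_cut hHsConn (C₁ ∪ {v₁}) v₂ C₂ hend₂ hdisj₂ hmin₂
  -- v₂ is not in C₁
  have hv₂C₁ : v₂ ∉ C₁ := by
    intro hmem
    have hconn' := hnocut₁ v₂ hmem
    -- but C₂ hangs at v₂: contradiction
    obtain ⟨hv₂a', hC₂ne', -, -, -, -, q₂, hq₂a, hq₂C₂, hq₂v₂⟩ := id hend₂
    obtain ⟨p₂, hp₂⟩ := hC₂ne'
    have hq₂Hs : q₂ ∈ Hs \ {v₂} := ⟨hq₂a, hq₂v₂⟩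
    have hp₂Hs : p₂ ∈ Hs \ {v₂} := ⟨hC₂Hs p₂ hp₂, fun h => hv₂C₂ (h ▸ hp₂)⟩
    obtain ⟨p, hp⟩ := hconn'.2 p₂ hp₂Hs q₂ hq₂Hs
    have := escape_aux (C := C₂) (T := {v₂, a}) p
      (fun c hc s hs hadj => by
        rcases hbd₂ c hc s hs hadj with h | h
        · exact Or.inl h
        · exact Or.inr h)
      (fun s hs => by
        have := hp s hs
        simp only [Set.mem_insert_iff, Set.mem_singleton_iff]
        push_neg
        exact ⟨this.2, this.1⟩) hp₂
    exact hq₂C₂ this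
  -- a has a neighbor in each fragment
  have hnbr : ∀ (v' : V) (C' : Set V), (∀ c ∈ C', c ≠ a) → v' ∉ C' → v' ≠ a →
      C'.Nonempty → (∀ p ∈ C', ∀ q, q ∉ C' → G.Adj p q → q = v' ∨ q = a) →
      ∃ u ∈ C', G.Adj a u := by
    intro v' C' hCHs hvC hva hCne hbd
    by_contra hno
    push_neg at hno
    obtain ⟨c, hc⟩ := hCne
    have hcv' : c ≠ v' := fun h => hvC (h ▸ hc)
    have hav' : a ≠ v' := fun h => hva h.symm
    obtain ⟨p, hp⟩ := (h2 v').2 c hcv' a hav'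
    have hend := escape_aux (C := C') (T := {v'}) p
      (fun cc hcc q hq hadj => by
        rcases hbd cc hcc q hq hadj with h | h
        · exact h ▸ rfl
        · exact absurd (h ▸ hadj).symm (hno cc hcc))
      (fun s hs => by simpa using hp s hs) hc
    exact hCHs a hend rfl
  obtain ⟨u₁, hu₁C, hu₁adj⟩ := hnbr v₁ C₁ hC₁Hs hv₁C₁ hv₁a hC₁ne hbd₁
  obtain ⟨u₂, hu₂C, hu₂adj⟩ := hnbr v₂ C₂ hC₂Hs hv₂C₂ hv₂a hC₂ne hbd₂
  have hu₁u₂ : u₁ ≠ u₂ := fun h => hC₁C₂ u₂ hu₂C (h ▸ hu₁C)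
  have hnadj : ¬ G.Adj u₁ u₂ := by
    intro hadj
    rcases hbd₁ u₁ hu₁C u₂ (hC₁C₂ u₂ hu₂C) hadj with h | h
    · exact hv₁C₂ (h ▸ hu₂C)
    · exact hC₂Hs u₂ hu₂C h
  have hu₁a : u₁ ≠ a := hC₁Hs u₁ hu₁C
  have hu₂a : u₂ ≠ a := hC₂Hs u₂ hu₂C
  set S₂ : Set V := {w | w ≠ u₁ ∧ w ≠ u₂} with hS₂def
  have hv₁Hs : v₁ ∈ Hs := hv₁a
  have hv₂Hs : v₂ ∈ Hs := hv₂a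
  have haS₂ : a ∈ S₂ := ⟨fun h => hu₁a h.symm, fun h => hu₂a h.symm⟩
  have hv₁S₂ : v₁ ∈ S₂ := ⟨fun h => hv₁C₁ (h ▸ hu₁C), fun h => hv₁C₂ (h ▸ hu₂C)⟩
  -- everything outside C₁ reaches v₁ avoiding C₁
  have star1 : ∀ z ∈ Hs \ C₁, Rchb G (Hs \ C₁) z v₁ := by
    intro z hz
    obtain ⟨p, hp⟩ := hHsConn.2 z hz.1 v₁ hv₁Hs
    refine lc_aux p hv₁C₁ ?_ hp hz.2
    intro c hc t ht htC hadj
    rcases hbd₁ c hc t htC hadj with h | h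
    · exact h
    · exact absurd h ht
  have hconnHsC₁ : Conn G (Hs \ C₁) := by
    refine ⟨⟨v₁, hv₁Hs, hv₁C₁⟩, fun p hp q hq => ?_⟩
    exact (star1 p hp).trans (star1 q hq).symm
  have hv₂A : v₂ ∈ Hs \ C₁ := ⟨hv₂Hs, hv₂C₁⟩
  have star2 : ∀ z ∈ (Hs \ C₁) \ C₂, Rchb G ((Hs \ C₁) \ C₂) z v₂ := by
    intro z hz
    obtain ⟨p, hp⟩ := hconnHsC₁.2 z hz.1 v₂ hv₂A
    refine lc_aux p hv₂C₂ ?_ hp hz.2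
    intro c hc t ht htC hadj
    rcases hbd₂ c hc t htC hadj with h | h
    · exact h
    · exact absurd h ht.1
  have hv₁R : v₁ ∈ (Hs \ C₁) \ C₂ := ⟨⟨hv₁Hs, hv₁C₁⟩, hv₁C₂⟩
  have hRS₂ : (Hs \ C₁) \ C₂ ⊆ S₂ := by
    intro t ht
    exact ⟨fun h => ht.1.2 (h ▸ hu₁C), fun h => ht.2 (h ▸ hu₂C)⟩
  -- fragment members reach the fragment's cut vertex
  have hfrag : ∀ (v' u' : V) (C' : Set V), u' ∈ C' → v' ∉ C' → v' ≠ a → (∀ c ∈ C', c ≠ a) →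
      (∀ p ∈ C', ∀ q, q ∉ C' → G.Adj p q → q = v' ∨ q = a) →
      Conn G (Hs \ {u'}) →
      ∀ z ∈ C' \ {u'}, Rchb G ((C' \ {u'}) ∪ {v'}) z v' := by
    intro v' u' C' hu' hv' hv'a hCHs hbd hcn z hz
    have hzHs : z ∈ Hs \ {u'} := ⟨hCHs z hz.1, hz.2⟩
    have hv'Hs : v' ∈ Hs \ {u'} := ⟨hv'a, fun h => hv' (h ▸ hu')⟩
    obtain ⟨p, hp⟩ := hcn.2 z hzHs v' hv'Hs
    have := first_exit_aux (C := C' \ {u'}) (T := {a, u'}) (v := v') p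
      (fun c hc t ht hadj => by
        by_cases htC : t ∈ C'
        · have : t = u' := by
            by_contra hne
            exact ht ⟨htC, hne⟩
          exact Or.inr (by simp [this])
        · rcases hbd c hc.1 t htC hadj with h | h
          · exact Or.inl h
          · exact Or.inr (by simp [h]))
      (fun t ht => by
        have := hp t ht
        simp only [Set.mem_insert_iff, Set.mem_singleton_iff]
        push_neg
        exact ⟨this.1, this.2⟩) hz
    rcases this with h | h
    · exact absurd h.1 hv'
    · exact h
  -- the main reachability claim
  have hbody : ∀ z ∈ S₂, z ≠ a → Rchb G S₂ z v₁ := by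
    intro z hzS hza
    by_cases hz1 : z ∈ C₁
    · have := hfrag v₁ u₁ C₁ hu₁C hv₁C₁ hv₁a hC₁Hs hbd₁ (hnocut₁ u₁ hu₁C) z ⟨hz1, hzS.1⟩
      refine this.mono ?_
      rintro t (⟨ht1, ht2⟩ | ht)
      · exact ⟨ht2, fun h => hC₁C₂ u₂ hu₂C (h ▸ ht1)⟩
      · exact ht ▸ hv₁S₂
    · by_cases hz2 : z ∈ C₂
      · have hreach := hfrag v₂ u₂ C₂ hu₂C hv₂C₂ hv₂a hC₂Hs hbd₂ (hnocut₂ u₂ hu₂C) z ⟨hz2, hzS.2⟩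
        have hmono : Rchb G S₂ z v₂ := by
          refine hreach.mono ?_
          rintro t (⟨ht1, ht2⟩ | ht)
          · exact ⟨fun h => hC₁C₂ t ht1 (h ▸ hu₁C), ht2⟩
          · subst ht
            exact ⟨fun h => hv₂C₁ (h ▸ hu₁C), fun h => hv₂C₂ (h ▸ hu₂C)⟩
        exact hmono.trans (((star2 v₁ hv₁R).symm).mono hRS₂)
      · have hzR : z ∈ (Hs \ C₁) \ C₂ := ⟨⟨hza, hz1⟩, hz2⟩
        exact ((star2 z hzR).trans (star2 v₁ hv₁R).symm).mono hRS₂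
  have hreachall : ∀ z ∈ S₂, Rchb G S₂ z v₁ := by
    intro z hzS
    by_cases hza : z = a
    · subst hza
      -- third neighbor of a
      have hnotsub : ¬ (G.neighborFinset z ⊆ {u₁, u₂}) := by
        intro hsub
        have h1 := Finset.card_le_card hsub
        have h2 : ({u₁, u₂} : Finset V).card ≤ 2 :=
          (Finset.card_insert_le _ _).trans (by simp)
        rw [card_neighborFinset_eq_degree, hreg] at h1
        omega
      obtain ⟨t, htnb, htne⟩ := Finset.not_subset.1 hnotsub
      rw [mem_neighborFinset] at htnb
      simp only [Finset.mem_insert, Finset.mem_singleton] at htne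
      push_neg at htne
      have htS : t ∈ S₂ := ⟨htne.1, htne.2⟩
      have hta : t ≠ z := fun h => G.irrefl (h ▸ htnb)
      exact (rchb_adj htnb hzS htS).trans (hbody t htS hta)
    · exact hbody z hzS hza
  exact ⟨a, u₁, u₂, hu₁adj, hu₂adj, hu₁u₂, hnadj,
    ⟨⟨v₁, hv₁S₂⟩, fun p hp q hq => (hreachall p hp).trans (hreachall q hq).symm⟩⟩

end Part9

section Part10
variable {V : Type*} [Fintype V] {G : SimpleGraph V}

lemma caseB2 [DecidableRel G.Adj] (Δ : ℕ) (hΔ : 3 ≤ Δ) (hdeg : ∀ w, G.degree w ≤ Δ)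
    (x u v : V) (hxu : G.Adj x u) (hxv : G.Adj x v) (huv : u ≠ v) (hnadj : ¬ G.Adj u v)
    (hconnS : Conn G {w | w ≠ u ∧ w ≠ v}) :
    ∃ c : V → ℕ, (∀ w, c w < Δ) ∧ ∀ p q, G.Adj p q → c p ≠ c q := by
  classical
  set S : Set V := {w | w ≠ u ∧ w ≠ v} with hSdef
  letI : DecidableRel (G.induce S).Adj := Classical.decRel _
  have hxS : x ∈ S := ⟨G.ne_of_adj hxu, G.ne_of_adj hxv⟩
  have huS : u ∉ S := fun h => h.1 rfl
  have hvS : v ∉ S := fun h => h.2 rfl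
  have hconn' : (G.induce S).Connected := conn_iff_connected.1 hconnS
  obtain ⟨f, hfinj, hf⟩ := exists_rank (G.induce S) hconn' ⟨x, hxS⟩
  set L : ↥S → Finset ℕ := fun w =>
    if G.Adj w.1 u ∨ G.Adj w.1 v then (Finset.range Δ).erase 0 else Finset.range Δ with hL
  have hLcard : ∀ w, (L w).card = if G.Adj w.1 u ∨ G.Adj w.1 v then Δ - 1 else Δ := by
    intro w
    simp only [hL]
    by_cases h : G.Adj w.1 u ∨ G.Adj w.1 v
    · rw [if_pos h, if_pos h, Finset.card_erase_of_mem (by simp; omega), Finset.card_range]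
    · rw [if_neg h, if_neg h, Finset.card_range]
  have hcards : ∀ w : ↥S,
      (((G.induce S).neighborFinset w).filter (fun t => f t < f w)).card < (L w).card := by
    intro w
    by_cases hwx : w = (⟨x, hxS⟩ : ↥S)
    · subst hwx
      have h1 := filter_card_le' (G.induce S) f (⟨x, hxS⟩ : ↥S)
      have h2 : (G.induce S).degree (⟨x, hxS⟩ : ↥S) + 2 ≤ G.degree x := by
        have := induce_degree_add_le (G := G) S ⟨x, hxS⟩ {u, v} (by
          intro t ht
          rcases Finset.mem_insert.1 ht with rfl | ht'
          · exact ⟨hxu, huS⟩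
          · rw [Finset.mem_singleton] at ht'
            subst ht'
            exact ⟨hxv, hvS⟩)
        rwa [Finset.card_insert_of_notMem (by simpa using huv), Finset.card_singleton] at this
      have h3 := hdeg x
      rw [hLcard]
      rw [if_pos (Or.inl hxu)]
      omega
    · obtain ⟨z, hz, hlt⟩ := hf _ hwx
      have h1 := filter_card_le (G.induce S) f _ hz hlt
      rw [hLcard]
      by_cases hadj : G.Adj w.1 u ∨ G.Adj w.1 v
      · rw [if_pos hadj]
        have h2 : (G.induce S).degree w + 1 ≤ G.degree w.1 := by
          rcases hadj with h | h
          · have := induce_degree_add_le (G := G) S w {u} (by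
              intro t ht
              rw [Finset.mem_singleton] at ht
              subst ht
              exact ⟨h, huS⟩)
            simpa using this
          · have := induce_degree_add_le (G := G) S w {v} (by
              intro t ht
              rw [Finset.mem_singleton] at ht
              subst ht
              exact ⟨h, hvS⟩)
            simpa using this
        have h3 := hdeg w.1
        omega
      · rw [if_neg hadj]
        have h2 : (G.induce S).degree w ≤ G.degree w.1 := by
          have := induce_degree_add_le (G := G) S w ∅ (by simp)
          simpa using this
        have h3 := hdeg w.1
        omega
  obtain ⟨c', hc'mem, hc'prop⟩ := greedy_coloring (G.induce S) f hfinj L hcards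
  have hc'lt : ∀ w, c' w < Δ := by
    intro w
    have := hc'mem w
    simp only [hL] at this
    by_cases h : G.Adj w.1 u ∨ G.Adj w.1 v
    · rw [if_pos h] at this
      exact Finset.mem_range.1 (Finset.mem_of_mem_erase this)
    · rw [if_neg h] at this
      exact Finset.mem_range.1 this
  have hc'ne0 : ∀ w, G.Adj w.1 u ∨ G.Adj w.1 v → c' w ≠ 0 := by
    intro w h
    have := hc'mem w
    simp only [hL] at this; rw [if_pos h] at this
    exact Finset.ne_of_mem_erase this
  refine ⟨fun w => if hw : w ∈ S then c' ⟨w, hw⟩ else 0, fun w => ?_, ?_⟩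
  · by_cases hw : w ∈ S
    · simp only [dif_pos hw]; exact hc'lt _
    · simp only [dif_neg hw]; omega
  · intro p q hadj heq
    by_cases hp : p ∈ S
    · by_cases hq : q ∈ S
      · simp only [dif_pos hp, dif_pos hq] at heq
        exact hc'prop ⟨p, hp⟩ ⟨q, hq⟩ hadj heq
      · -- q = u or q = v
        have hq' : q = u ∨ q = v := by
          by_contra h
          push_neg at h
          exact hq ⟨h.1, h.2⟩
        simp only [dif_pos hp, dif_neg hq] at heq
        refine hc'ne0 ⟨p, hp⟩ ?_ heq
        rcases hq' with rfl | rfl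
        · exact Or.inl hadj
        · exact Or.inr hadj
    · have hp' : p = u ∨ p = v := by
        by_contra h
        push_neg at h
        exact hp ⟨h.1, h.2⟩
      by_cases hq : q ∈ S
      · simp only [dif_neg hp, dif_pos hq] at heq
        refine hc'ne0 ⟨q, hq⟩ ?_ heq.symm
        rcases hp' with rfl | rfl
        · exact Or.inl hadj.symm
        · exact Or.inr hadj.symm
      · have hq' : q = u ∨ q = v := by
          by_contra h
          push_neg at h
          exact hq ⟨h.1, h.2⟩
        rcases hp' with rfl | rfl <;> rcases hq' with rfl | rfl
        · exact G.irrefl hadj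
        · exact hnadj hadj
        · exact hnadj hadj.symm
        · exact G.irrefl hadj
end Part10

section Part11
variable {V : Type*} [Fintype V] {G : SimpleGraph V}

lemma ncard_neighborSet_eq_degree [DecidableRel G.Adj] (w : V) :
    (G.neighborSet w).ncard = G.degree w := by
  rw [Set.ncard_eq_toFinset_card', Set.toFinset_card, ← card_neighborFinset_eq_degree,
    neighborFinset_def, Set.toFinset_card]

theorem brooks (Δ : ℕ) (hΔ : 3 ≤ Δ) (hconn : G.Connected)
    (hmax : ∀ w, (G.neighborSet w).ncard ≤ Δ) (hclique : G ≠ ⊤) :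
    G.Colorable Δ := by
  classical
  letI : DecidableRel G.Adj := Classical.decRel _
  have hdeg : ∀ w, G.degree w ≤ Δ := fun w => by
    rw [← ncard_neighborSet_eq_degree]; exact hmax w
  have key : ∃ c : V → ℕ, (∀ w, c w < Δ) ∧ ∀ p q, G.Adj p q → c p ≠ c q := by
    by_cases hreg : ∀ w, G.degree w = Δ
    · by_cases h2 : ∀ x : V, Conn G {w | w ≠ x}
      · obtain ⟨x, u, v, hxu, hxv, huv, hnadj, hS⟩ :=
          structural Δ hΔ hconn hreg hclique h2
        exact caseB2 Δ hΔ hdeg x u v hxu hxv huv hnadj hS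
      · push_neg at h2
        obtain ⟨x, hx⟩ := h2
        exact glue Δ hΔ hconn hreg x hx
    · push_neg at hreg
      obtain ⟨x, hx⟩ := hreg
      have hxlt : G.degree x < Δ := lt_of_le_of_ne (hdeg x) hx
      exact caseA G hconn Δ hdeg x hxlt
  obtain ⟨c, hlt, hprop⟩ := key
  exact ⟨Coloring.mk (fun w => (⟨c w, hlt w⟩ : Fin Δ))
    (fun {p q} hadj h => hprop p q hadj (by simpa using congrArg Fin.val h))⟩

end Part11

end Brooks


/-- A connected graph with all degrees at most Δ, Δ ≥ 3, that is neither a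
path, a cycle, nor a clique (a nice graph) is Δ-colorable. -/
theorem stmt17 {V : Type*} [Fintype V] (G : SimpleGraph V) (Δ : ℕ)
    (hΔ : 3 ≤ Δ) (hconn : G.Connected)
    (hmax : ∀ w, (G.neighborSet w).ncard ≤ Δ)
    (hpath : ¬ ((∀ w, (G.neighborSet w).ncard ≤ 2) ∧
        ∃ w, (G.neighborSet w).ncard ≤ 1))
    (hcycle : ¬ (∀ w, (G.neighborSet w).ncard = 2))
    (hclique : G ≠ ⊤) :
    G.Colorable Δ :=
  Brooks.brooks Δ hΔ hconn hmax hclique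
end
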